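/- arXiv:2605.22178 — 12 statements merged into one kernel-verified Lean document; each statement's English description precedes it below -/
import Mathlib

section
/- For every real number p ≥ 2 and all vectors ξ, η in ℝ^m, ⟨|ξ|^{p-2}ξ − |η|^{p-2}η, ξ − η⟩ ≥ 2^{1−p} |ξ − η|^p. -/
/-!
Write `a = ‖ξ‖`, `b = ‖η‖` and `q = p - 2`. Polarising gives
`⟪a^q ξ - b^q η, ξ - η⟫ = (a^q + b^q)/2 · ‖ξ - η‖² + (a^q - b^q)(a² - b²)/2`.
The second term is nonnegative because `t ↦ t^q` and `t ↦ t²` are both increasing, and in the first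
`a^q + b^q ≥ max(a, b)^q ≥ (‖ξ - η‖/2)^q` by the triangle inequality.
-/

open Real

section RpowBounds

variable {a b q : ℝ}

lemma rpow_sub_rpow_mul_sq_sub_sq_nonneg (ha : 0 ≤ a) (hb : 0 ≤ b) (hq : 0 ≤ q) :
    0 ≤ (a ^ q - b ^ q) * (a ^ 2 - b ^ 2) := by
  rcases le_total a b with hab | hab
  · exact mul_nonneg_of_nonpos_of_nonpos
      (sub_nonpos.2 (rpow_le_rpow ha hab hq)) (sub_nonpos.2 (by gcongr))
  · exact mul_nonneg
      (sub_nonneg.2 (rpow_le_rpow hb hab hq)) (sub_nonneg.2 (by gcongr))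

lemma half_rpow_le_rpow_add_rpow {c : ℝ} (ha : 0 ≤ a) (hb : 0 ≤ b) (hc : 0 ≤ c)
    (hcab : c ≤ a + b) (hq : 0 ≤ q) : (c / 2) ^ q ≤ a ^ q + b ^ q := by
  rcases le_total a b with hab | hab
  · calc (c / 2) ^ q ≤ b ^ q := rpow_le_rpow (by positivity) (by linarith) hq
      _ ≤ a ^ q + b ^ q := le_add_of_nonneg_left (rpow_nonneg ha q)
  · calc (c / 2) ^ q ≤ a ^ q := rpow_le_rpow (by positivity) (by linarith) hq
      _ ≤ a ^ q + b ^ q := le_add_of_nonneg_right (rpow_nonneg hb q)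

end RpowBounds

section InnerProductSpace

variable {E : Type*} [NormedAddCommGroup E] [InnerProductSpace ℝ E]

lemma inner_norm_rpow_smul_sub_eq (q : ℝ) (x y : E) :
    inner ℝ (‖x‖ ^ q • x - ‖y‖ ^ q • y) (x - y) =
      (‖x‖ ^ q + ‖y‖ ^ q) / 2 * ‖x - y‖ ^ 2
        + (‖x‖ ^ q - ‖y‖ ^ q) * (‖x‖ ^ 2 - ‖y‖ ^ 2) / 2 := by
  rw [norm_sub_sq_real]
  simp only [inner_sub_left, inner_sub_right, real_inner_smul_left,
    real_inner_self_eq_norm_sq, real_inner_comm x y]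
  ring

lemma half_rpow_mul_sq_le_inner_norm_rpow_smul_sub {q : ℝ} (hq : 0 ≤ q) (x y : E) :
    (‖x - y‖ / 2) ^ q * ‖x - y‖ ^ 2 / 2 ≤ inner ℝ (‖x‖ ^ q • x - ‖y‖ ^ q • y) (x - y) := by
  have hmain : (‖x - y‖ / 2) ^ q ≤ ‖x‖ ^ q + ‖y‖ ^ q :=
    half_rpow_le_rpow_add_rpow (norm_nonneg x) (norm_nonneg y) (norm_nonneg _)
      (norm_sub_le x y) hq
  have hrest := rpow_sub_rpow_mul_sq_sub_sq_nonneg (norm_nonneg x) (norm_nonneg y) hq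
  rw [inner_norm_rpow_smul_sub_eq]
  nlinarith [sq_nonneg ‖x - y‖]

end InnerProductSpace

theorem stmt_0 (m : ℕ) (p : ℝ) (hp : 2 ≤ p)
    (ξ η : EuclideanSpace ℝ (Fin m)) :
    (inner ℝ ((‖ξ‖ ^ (p - 2)) • ξ - (‖η‖ ^ (p - 2)) • η) (ξ - η) : ℝ) ≥
      (2 : ℝ) ^ (1 - p) * ‖ξ - η‖ ^ p := by
  set c := ‖ξ - η‖
  have hc : 0 ≤ c := norm_nonneg _
  have hsplit : c ^ p = c ^ (p - 2) * c ^ 2 := by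
    rw [← rpow_two, ← rpow_add' hc (by linarith), sub_add_cancel]
  have hlhs : (2 : ℝ) ^ (1 - p) * c ^ p = (c / 2) ^ (p - 2) * c ^ 2 / 2 := by
    rw [show 1 - p = -(p - 2) + -1 by ring, rpow_add two_pos, rpow_neg zero_le_two, rpow_neg_one,
      div_rpow hc zero_le_two, hsplit]
    ring
  rw [ge_iff_le, hlhs]
  exact half_rpow_mul_sq_le_inner_norm_rpow_smul_sub (by linarith) ξ η
end

section
/- For every real number p with 1 < p ≤ 2 and all vectors ξ, η in ℝ^m not both zero, ⟨|ξ|^{p-2}ξ − |η|^{p-2}η, ξ − η⟩ ≥ (p−1)(|ξ|^2 + |η|^2)^{(p-2)/2} |ξ − η|^2. -/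
/-!
With `a = ‖ξ‖`, `b = ‖η‖` and `t = ⟪ξ, η⟫`, the left side splits as
`(a - b) (a ^ (p - 1) - b ^ (p - 1)) + (a b - t) (a ^ (p - 2) + b ^ (p - 2))`, while
`‖ξ - η‖² = (a - b)² + 2 (a b - t)` with `a b - t ≥ 0` by Cauchy–Schwarz. The radial term is
bounded by the tangent-line inequality for the concave map `x ↦ x ^ (p - 1)`, the angular one by
`(a² + b²) ^ ((p - 2) / 2) ≤ min a b ^ (p - 2)`, which holds because `p ≤ 2`.
-/

open Real

lemma rpow_le_rpow_add_mul_sub {a b r : ℝ} (ha : 0 < a) (hb : 0 ≤ b) (hr₀ : 0 ≤ r) (hr₁ : r ≤ 1) :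
    b ^ r ≤ a ^ r + r * a ^ (r - 1) * (b - a) := by
  have hbern := rpow_one_add_le_one_add_mul_self (s := b / a - 1)
    (by linarith [div_nonneg hb ha.le]) hr₀ hr₁
  rw [add_sub_cancel, div_rpow hb ha.le, div_le_iff₀ (rpow_pos_of_pos ha r)] at hbern
  calc b ^ r ≤ (1 + r * (b / a - 1)) * a ^ r := hbern
    _ = a ^ r + r * a ^ (r - 1) * (b - a) := by
      rw [rpow_sub_one ha.ne']; field_simp

lemma rpow_div_two_le_rpow {a s q : ℝ} (ha : 0 < a) (hs : a ^ 2 ≤ s) (hq : q ≤ 0) :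
    s ^ (q / 2) ≤ a ^ q :=
  calc s ^ (q / 2) ≤ (a ^ 2) ^ (q / 2) := rpow_le_rpow_of_nonpos (by positivity) hs (by linarith)
    _ = a ^ q := by rw [← rpow_natCast, ← rpow_mul ha.le]; ring_nf

lemma mul_sq_sub_le_sub_mul_rpow_sub {p a b : ℝ} (hp1 : 1 ≤ p) (hp2 : p ≤ 2)
    (ha : 0 ≤ a) (hb : 0 ≤ b) :
    (p - 1) * (a ^ 2 + b ^ 2) ^ ((p - 2) / 2) * (a - b) ^ 2 ≤
      (a - b) * (a ^ (p - 1) - b ^ (p - 1)) := by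
  wlog hba : b ≤ a generalizing a b
  · have := this hb ha (le_of_not_ge hba)
    rw [add_comm] at this
    linarith
  rcases ha.eq_or_lt with rfl | ha
  · obtain rfl : b = 0 := le_antisymm hba hb
    simp
  have htangent := rpow_le_rpow_add_mul_sub ha hb (r := p - 1) (by linarith) (by linarith)
  rw [show p - 1 - 1 = p - 2 by ring] at htangent
  have hX := rpow_div_two_le_rpow ha (s := a ^ 2 + b ^ 2) (by nlinarith) (by linarith : p - 2 ≤ 0)
  have hX₀ : 0 ≤ (a ^ 2 + b ^ 2) ^ ((p - 2) / 2) := by positivity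
  have hab : 0 ≤ a - b := by linarith
  nlinarith [mul_le_mul_of_nonneg_left hX (by nlinarith : 0 ≤ (p - 1) * (a - b) ^ 2)]

lemma two_mul_mul_rpow_le_rpow_add_rpow {p a b : ℝ} (hp2 : p ≤ 2)
    (ha : 0 < a) (hb : 0 < b) :
    2 * ((p - 1) * (a ^ 2 + b ^ 2) ^ ((p - 2) / 2)) ≤ a ^ (p - 2) + b ^ (p - 2) := by
  have hXa := rpow_div_two_le_rpow ha (s := a ^ 2 + b ^ 2) (by nlinarith) (by linarith : p - 2 ≤ 0)
  have hXb := rpow_div_two_le_rpow hb (s := a ^ 2 + b ^ 2) (by nlinarith) (by linarith : p - 2 ≤ 0)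
  have hX₀ : 0 ≤ (a ^ 2 + b ^ 2) ^ ((p - 2) / 2) := by positivity
  nlinarith

lemma mul_sq_add_le_of_abs_le_mul {p a b t : ℝ} (hp1 : 1 ≤ p) (hp2 : p ≤ 2)
    (ha : 0 ≤ a) (hb : 0 ≤ b) (ht : |t| ≤ a * b) :
    (p - 1) * (a ^ 2 + b ^ 2) ^ ((p - 2) / 2) * ((a - b) ^ 2 + 2 * (a * b - t)) ≤
      (a - b) * (a ^ (p - 1) - b ^ (p - 1)) + (a * b - t) * (a ^ (p - 2) + b ^ (p - 2)) := by
  have hradial := mul_sq_sub_le_sub_mul_rpow_sub hp1 hp2 ha hb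
  have hangular : 2 * ((p - 1) * (a ^ 2 + b ^ 2) ^ ((p - 2) / 2)) * (a * b - t) ≤
      (a * b - t) * (a ^ (p - 2) + b ^ (p - 2)) := by
    -- For `a = 0` or `b = 0` the bound on the powers fails (`0 ^ (p - 2) = 0` when `p < 2`),
    -- but then `t = 0` and the factor `a * b - t` vanishes.
    rcases ha.eq_or_lt with rfl | ha
    · obtain rfl : t = 0 := by simpa using ht
      simp
    rcases hb.eq_or_lt with rfl | hb
    · obtain rfl : t = 0 := by simpa using ht
      simp
    rw [mul_comm]
    exact mul_le_mul_of_nonneg_left (two_mul_mul_rpow_le_rpow_add_rpow hp2 ha hb)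
      (by linarith [le_abs_self t])
  linear_combination hradial + hangular

theorem mul_norm_sub_sq_le_inner_rpow_smul_sub {E : Type*} [NormedAddCommGroup E]
    [InnerProductSpace ℝ E] {p : ℝ} (hp1 : 1 < p) (hp2 : p ≤ 2) (ξ η : E) :
    (p - 1) * (‖ξ‖ ^ 2 + ‖η‖ ^ 2) ^ ((p - 2) / 2) * ‖ξ - η‖ ^ 2 ≤
      inner ℝ (‖ξ‖ ^ (p - 2) • ξ - ‖η‖ ^ (p - 2) • η) (ξ - η) := by
  have hpow : ∀ x : ℝ, 0 ≤ x → x ^ (p - 2) * x = x ^ (p - 1) := fun x hx => by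
    rw [← rpow_add_one' hx (by linarith)]; ring_nf
  have hinner : inner ℝ (‖ξ‖ ^ (p - 2) • ξ - ‖η‖ ^ (p - 2) • η) (ξ - η) =
      (‖ξ‖ - ‖η‖) * (‖ξ‖ ^ (p - 1) - ‖η‖ ^ (p - 1)) +
        (‖ξ‖ * ‖η‖ - inner ℝ ξ η) * (‖ξ‖ ^ (p - 2) + ‖η‖ ^ (p - 2)) := by
    rw [← hpow _ (norm_nonneg ξ), ← hpow _ (norm_nonneg η)]
    simp only [inner_sub_left, inner_sub_right, real_inner_smul_left,
      real_inner_self_eq_norm_sq, real_inner_comm η ξ]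
    ring
  have hnorm : ‖ξ - η‖ ^ 2 = (‖ξ‖ - ‖η‖) ^ 2 + 2 * (‖ξ‖ * ‖η‖ - inner ℝ ξ η) := by
    rw [norm_sub_sq_real]; ring
  rw [hinner, hnorm]
  exact mul_sq_add_le_of_abs_le_mul hp1.le hp2 (norm_nonneg ξ) (norm_nonneg η)
    (abs_real_inner_le_norm ξ η)

theorem stmt_2_general (m : ℕ) (p : ℝ) (hp1 : 1 < p) (hp2 : p ≤ 2)
    (ξ η : EuclideanSpace ℝ (Fin m)) :
    (inner ℝ ((‖ξ‖ ^ (p - 2)) • ξ - (‖η‖ ^ (p - 2)) • η) (ξ - η) : ℝ) ≥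
      (p - 1) * (‖ξ‖ ^ 2 + ‖η‖ ^ 2) ^ ((p - 2) / 2) * ‖ξ - η‖ ^ 2 :=
  mul_norm_sub_sq_le_inner_rpow_smul_sub hp1 hp2 ξ η

theorem stmt_2 (m : ℕ) (p : ℝ) (hp1 : 1 < p) (hp2 : p ≤ 2)
    (ξ η : EuclideanSpace ℝ (Fin m)) (hne : ¬(ξ = 0 ∧ η = 0)) :
    (inner ℝ ((‖ξ‖ ^ (p - 2)) • ξ - (‖η‖ ^ (p - 2)) • η) (ξ - η) : ℝ) ≥
      (p - 1) * (‖ξ‖ ^ 2 + ‖η‖ ^ 2) ^ ((p - 2) / 2) * ‖ξ - η‖ ^ 2 :=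
  stmt_2_general m p hp1 hp2 ξ η
end

section
/- For every real number p ≥ 2, every μ ∈ ℝ, and all vectors ξ, η in ℝ^m, ⟨(μ²+|ξ|²)^{(p-2)/2} ξ − (μ²+|η|²)^{(p-2)/2} η, ξ − η⟩ ≥ 2^{-p/2} (2μ² + |ξ|² + |η|²)^{(p-2)/2} |ξ − η|². -/
/-!
Writing `a = (μ² + |ξ|²)^q`, `b = (μ² + |η|²)^q` with `q = (p - 2)/2 ≥ 0`, one has
`⟨aξ - bη, ξ - η⟩ = (a + b)/2 |ξ - η|² + (a - b)/2 (|ξ|² - |η|²)`.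
The second term is nonnegative because `t ↦ t^q` is monotone, and in the first
`a + b ≥ max(a, b) ≥ ((2μ² + |ξ|² + |η|²)/2)^q`, which is `2^(1 - p/2) (2μ² + |ξ|² + |η|²)^q`.
-/

open Real

theorem inner_smul_sub_smul_sub_eq {E : Type*} [NormedAddCommGroup E] [InnerProductSpace ℝ E]
    (a b : ℝ) (x y : E) :
    inner ℝ (a • x - b • y) (x - y) =
      (a + b) / 2 * ‖x - y‖ ^ 2 + (a - b) / 2 * (‖x‖ ^ 2 - ‖y‖ ^ 2) := by
  rw [norm_sub_sq_real]
  simp only [inner_sub_left, inner_sub_right, real_inner_smul_left,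
    real_inner_self_eq_norm_sq, real_inner_comm x y]
  ring

theorem rpow_sub_rpow_mul_sub_nonneg {u v q : ℝ} (hu : 0 ≤ u) (hv : 0 ≤ v) (hq : 0 ≤ q) :
    0 ≤ (u ^ q - v ^ q) * (u - v) := by
  rcases le_total u v with huv | hvu
  · have : u ^ q ≤ v ^ q := rpow_le_rpow hu huv hq
    exact mul_nonneg_of_nonpos_of_nonpos (by linarith) (by linarith)
  · have : v ^ q ≤ u ^ q := rpow_le_rpow hv hvu hq
    exact mul_nonneg (by linarith) (by linarith)

theorem rpow_half_add_le_rpow_add_rpow {u v q : ℝ} (hu : 0 ≤ u) (hv : 0 ≤ v) (hq : 0 ≤ q) :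
    ((u + v) / 2) ^ q ≤ u ^ q + v ^ q :=
  calc ((u + v) / 2) ^ q ≤ (max u v) ^ q :=
        rpow_le_rpow (by positivity) (by linarith [le_max_left u v, le_max_right u v]) hq
    _ = max (u ^ q) (v ^ q) := rpow_max hu hv hq
    _ ≤ u ^ q + v ^ q := max_le_add_of_nonneg (rpow_nonneg hu q) (rpow_nonneg hv q)

theorem two_rpow_neg_half_mul_rpow {s : ℝ} (p : ℝ) (hs : 0 ≤ s) :
    (2 : ℝ) ^ (-p / 2) * s ^ ((p - 2) / 2) = ((s / 2) ^ ((p - 2) / 2)) / 2 := by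
  rw [div_rpow hs zero_le_two, show -p / 2 = -((p - 2) / 2) - 1 by ring,
    rpow_sub two_pos, rpow_neg zero_le_two, rpow_one]
  field_simp

theorem stmt_3 (m : ℕ) (p : ℝ) (hp : 2 ≤ p) (μ : ℝ)
    (ξ η : EuclideanSpace ℝ (Fin m)) :
    (inner ℝ (((μ ^ 2 + ‖ξ‖ ^ 2) ^ ((p - 2) / 2)) • ξ -
        ((μ ^ 2 + ‖η‖ ^ 2) ^ ((p - 2) / 2)) • η) (ξ - η) : ℝ) ≥
      (2 : ℝ) ^ (-p / 2) * (2 * μ ^ 2 + ‖ξ‖ ^ 2 + ‖η‖ ^ 2) ^ ((p - 2) / 2) *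
        ‖ξ - η‖ ^ 2 := by
  have hq : 0 ≤ (p - 2) / 2 := by linarith
  set q := (p - 2) / 2
  set u := μ ^ 2 + ‖ξ‖ ^ 2
  set v := μ ^ 2 + ‖η‖ ^ 2
  have hu : 0 ≤ u := by positivity
  have hv : 0 ≤ v := by positivity
  have hsum : 2 * μ ^ 2 + ‖ξ‖ ^ 2 + ‖η‖ ^ 2 = u + v := by ring
  have hmono := rpow_sub_rpow_mul_sub_nonneg hu hv hq
  rw [show u - v = ‖ξ‖ ^ 2 - ‖η‖ ^ 2 by ring] at hmono
  rw [ge_iff_le, hsum, two_rpow_neg_half_mul_rpow p (add_nonneg hu hv),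
    inner_smul_sub_smul_sub_eq]
  calc ((u + v) / 2) ^ q / 2 * ‖ξ - η‖ ^ 2 ≤ (u ^ q + v ^ q) / 2 * ‖ξ - η‖ ^ 2 := by
        gcongr
        exact rpow_half_add_le_rpow_add_rpow hu hv hq
    _ ≤ _ := le_add_of_nonneg_right (by linarith)
end

section
/- For every real number p ≥ 2, every μ ∈ ℝ, and all vectors ξ, η in ℝ^m, ⟨(μ²+|ξ|²)^{(p-2)/2} ξ − (μ²+|η|²)^{(p-2)/2} η, ξ − η⟩ ≥ 2^{-p} |ξ − η|^p + (1/4) |μ|^{p-2} |ξ − η|². -/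
/-!
With `A = (μ² + |ξ|²)^((p-2)/2)` and `B = (μ² + |η|²)^((p-2)/2)` the pairing splits as
`(A + B)/2 · |ξ - η|² + (A - B)/2 · (|ξ|² - |η|²)`, and the second term is nonnegative because
`t ↦ (μ² + t)^((p-2)/2)` is monotone. Half of `(A + B)/2 · |ξ - η|²` dominates `(|μ|^(p-2)/4) |ξ - η|²`
since `A, B ≥ |μ|^(p-2)`; the other half dominates `2^(-p) |ξ - η|^p = (|ξ - η|/2)^(p-2) · |ξ - η|²/4`
since `|ξ - η|/2 ≤ max |ξ| |η|`, `A ≥ |ξ|^(p-2)` and `B ≥ |η|^(p-2)`.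
-/

open Real InnerProductSpace

lemma real_inner_smul_sub_smul_sub {E : Type*} [NormedAddCommGroup E] [InnerProductSpace ℝ E]
    (a b : ℝ) (x y : E) :
    ⟪a • x - b • y, x - y⟫_ℝ =
      (a + b) / 2 * ‖x - y‖ ^ 2 + (a - b) / 2 * (‖x‖ ^ 2 - ‖y‖ ^ 2) := by
  rw [norm_sub_sq_real]
  simp only [inner_sub_left, inner_sub_right, real_inner_smul_left, real_inner_self_eq_norm_sq,
    real_inner_comm x y]
  ring

lemma Real.rpow_sub_rpow_mul_sub_nonneg {a b q : ℝ} (ha : 0 ≤ a) (hb : 0 ≤ b) (hq : 0 ≤ q) :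
    0 ≤ (a ^ q - b ^ q) * (a - b) := by
  rcases le_total a b with hab | hab
  · exact mul_nonneg_of_nonpos_of_nonpos (sub_nonpos.2 (rpow_le_rpow ha hab hq)) (sub_nonpos.2 hab)
  · exact mul_nonneg (sub_nonneg.2 (rpow_le_rpow hb hab hq)) (sub_nonneg.2 hab)

lemma Real.abs_rpow_le_sq_add_sq_rpow_half (a b : ℝ) {r : ℝ} (hr : 0 ≤ r) :
    |a| ^ r ≤ (a ^ 2 + b ^ 2) ^ (r / 2) := by
  rw [rpow_div_two_eq_sqrt r (by positivity)]
  exact rpow_le_rpow (abs_nonneg a) (abs_le_sqrt (by nlinarith [sq_nonneg b])) hr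

lemma Real.add_div_two_rpow_le_rpow_add_rpow {a b r : ℝ} (ha : 0 ≤ a) (hb : 0 ≤ b) (hr : 0 ≤ r) :
    ((a + b) / 2) ^ r ≤ a ^ r + b ^ r := by
  have hmax : ((a + b) / 2) ^ r ≤ max a b ^ r :=
    rpow_le_rpow (by positivity) (by linarith [le_max_left a b, le_max_right a b]) hr
  rcases max_choice a b with h | h <;> rw [h] at hmax
  · linarith [rpow_nonneg hb r]
  · linarith [rpow_nonneg ha r]

lemma Real.two_rpow_neg_mul_rpow {s p : ℝ} (hs : 0 ≤ s) (hp : p ≠ 0) :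
    (2 : ℝ) ^ (-p) * s ^ p = (s / 2) ^ (p - 2) * s ^ 2 / 4 := by
  have hsplit : (s / 2) ^ p = (s / 2) ^ (p - 2) * (s / 2) ^ 2 := by
    rw [← rpow_two, ← rpow_add' (by positivity) (by rwa [sub_add_cancel]), sub_add_cancel]
  rw [rpow_neg zero_le_two, ← div_eq_inv_mul, ← div_rpow hs zero_le_two, hsplit]
  ring

theorem stmt_4 (m : ℕ) (p : ℝ) (hp : 2 ≤ p) (μ : ℝ)
    (ξ η : EuclideanSpace ℝ (Fin m)) :
    (inner ℝ (((μ ^ 2 + ‖ξ‖ ^ 2) ^ ((p - 2) / 2)) • ξ -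
        ((μ ^ 2 + ‖η‖ ^ 2) ^ ((p - 2) / 2)) • η) (ξ - η) : ℝ) ≥
      (2 : ℝ) ^ (-p) * ‖ξ - η‖ ^ p + (1 / 4) * |μ| ^ (p - 2) * ‖ξ - η‖ ^ 2 := by
  set A := (μ ^ 2 + ‖ξ‖ ^ 2) ^ ((p - 2) / 2)
  set B := (μ ^ 2 + ‖η‖ ^ 2) ^ ((p - 2) / 2)
  have hr : 0 ≤ p - 2 := by linarith
  have hmono : 0 ≤ (A - B) * (‖ξ‖ ^ 2 - ‖η‖ ^ 2) := by
    have := rpow_sub_rpow_mul_sub_nonneg (a := μ ^ 2 + ‖ξ‖ ^ 2) (b := μ ^ 2 + ‖η‖ ^ 2)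
      (by positivity) (by positivity) (div_nonneg hr zero_le_two)
    rwa [add_sub_add_left_eq_sub] at this
  have hμA : |μ| ^ (p - 2) ≤ A := abs_rpow_le_sq_add_sq_rpow_half μ ‖ξ‖ hr
  have hμB : |μ| ^ (p - 2) ≤ B := abs_rpow_le_sq_add_sq_rpow_half μ ‖η‖ hr
  have hsAB : (‖ξ - η‖ / 2) ^ (p - 2) ≤ A + B := by
    have hξA : ‖ξ‖ ^ (p - 2) ≤ A := by
      simpa only [abs_norm, add_comm] using abs_rpow_le_sq_add_sq_rpow_half ‖ξ‖ μ hr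
    have hηB : ‖η‖ ^ (p - 2) ≤ B := by
      simpa only [abs_norm, add_comm] using abs_rpow_le_sq_add_sq_rpow_half ‖η‖ μ hr
    calc (‖ξ - η‖ / 2) ^ (p - 2) ≤ ((‖ξ‖ + ‖η‖) / 2) ^ (p - 2) := by
          gcongr; exact norm_sub_le ξ η
      _ ≤ ‖ξ‖ ^ (p - 2) + ‖η‖ ^ (p - 2) :=
          add_div_two_rpow_le_rpow_add_rpow (norm_nonneg _) (norm_nonneg _) hr
      _ ≤ A + B := add_le_add hξA hηB
  have hs2 : 0 ≤ ‖ξ - η‖ ^ 2 := sq_nonneg _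
  rw [ge_iff_le, real_inner_smul_sub_smul_sub,
    two_rpow_neg_mul_rpow (norm_nonneg _) (by linarith : 0 < p).ne']
  linarith [mul_le_mul_of_nonneg_right hsAB hs2, mul_le_mul_of_nonneg_right hμA hs2,
    mul_le_mul_of_nonneg_right hμB hs2, mul_nonneg (rpow_nonneg (abs_nonneg μ) (p - 2)) hs2]
end

section
/- For every real number p with 1 < p ≤ 2, every μ ∈ ℝ, and all vectors ξ, η in ℝ^m with (μ, ξ, η) ≠ (0, 0, 0), ⟨(μ²+|ξ|²)^{(p-2)/2} ξ − (μ²+|η|²)^{(p-2)/2} η, ξ − η⟩ ≥ (p−1)(2μ² + |ξ|² + |η|²)^{(p-2)/2} |ξ − η|². -/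
/-!
Put `v = ξ - η` and `g t = ⟪a (η + t v), v⟫` with `a x = (μ² + |x|²)^((p-2)/2) x`, so the left side
is `g 1 - g 0`. Writing `γ = η + t v` and `B = μ² + |γ|²`, one computes
`g' = B^((p-4)/2) ((p-2) ⟪γ, v⟫² + B |v|²)`; since `p ≤ 2` and `⟪γ, v⟫² ≤ B |v|²`, this is at least
`(p-1) B^((p-2)/2) |v|²`, and `B ≤ 2μ² + |ξ|² + |η|²` on `[0, 1]` by convexity of `|·|²`. The mean
value theorem concludes when `μ ≠ 0`. For `μ = 0`, `B` vanishes where the segment crosses `0`, so that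
case is obtained by letting `μ → 0`.
-/

open Real Set Topology
open scoped RealInnerProductSpace

variable {E : Type*} [NormedAddCommGroup E] [InnerProductSpace ℝ E]

noncomputable def pLaplaceFlux (p μ : ℝ) (x : E) : E :=
  (μ ^ 2 + ‖x‖ ^ 2) ^ ((p - 2) / 2) • x

lemma continuous_pLaplaceFlux_param (p : ℝ) (x : E) :
    Continuous fun μ : ℝ => pLaplaceFlux p μ x := by
  rcases eq_or_ne x 0 with rfl | hx
  · simp only [pLaplaceFlux, smul_zero]
    exact continuous_const
  · have hx' : 0 < ‖x‖ := norm_pos_iff.2 hx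
    refine Continuous.smul ?_ continuous_const
    exact (by fun_prop : Continuous fun μ : ℝ => μ ^ 2 + ‖x‖ ^ 2).rpow_const
      fun μ => Or.inl (by positivity)

lemma norm_add_smul_sub_sq_le {x y : E} {t : ℝ} (ht₀ : 0 ≤ t) (ht₁ : t ≤ 1) :
    ‖x + t • (y - x)‖ ^ 2 ≤ ‖x‖ ^ 2 + ‖y‖ ^ 2 := by
  have hnorm : ‖x + t • (y - x)‖ ≤ (1 - t) * ‖x‖ + t * ‖y‖ := by
    calc ‖x + t • (y - x)‖ = ‖(1 - t) • x + t • y‖ := by congr 1; module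
      _ ≤ (1 - t) * ‖x‖ + t * ‖y‖ := by
        refine (norm_add_le _ _).trans_eq ?_
        rw [norm_smul, norm_smul, Real.norm_of_nonneg (by linarith), Real.norm_of_nonneg ht₀]
  have := norm_nonneg (x + t • (y - x))
  nlinarith [norm_nonneg x, norm_nonneg y, mul_nonneg ht₀ (sub_nonneg.2 ht₁),
    sq_nonneg (‖x‖ - ‖y‖)]

lemma hasDerivAt_inner_pLaplaceFlux_line {μ : ℝ} (hμ : μ ≠ 0) (p : ℝ) (x v : E) (t : ℝ) :
    HasDerivAt (fun t : ℝ => ⟪pLaplaceFlux p μ (x + t • v), v⟫)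
      ((μ ^ 2 + ‖x + t • v‖ ^ 2) ^ ((p - 2) / 2 - 1) *
        ((p - 2) * ⟪x + t • v, v⟫ ^ 2 + (μ ^ 2 + ‖x + t • v‖ ^ 2) * ‖v‖ ^ 2)) t := by
  have hline : HasDerivAt (fun t : ℝ => x + t • v) v t := by
    simpa using ((hasDerivAt_id t).smul_const v).const_add x
  have hB : 0 < μ ^ 2 + ‖x + t • v‖ ^ 2 := by positivity
  have hpow := (hline.norm_sq.const_add (μ ^ 2)).rpow_const (p := (p - 2) / 2) (Or.inl hB.ne')
  have hinner := hline.inner ℝ (hasDerivAt_const t v)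
  simp only [pLaplaceFlux, real_inner_smul_left]
  refine (hpow.mul hinner).congr_deriv ?_
  rw [rpow_sub_one hB.ne', inner_zero_right, real_inner_self_eq_norm_sq]
  field_simp
  ring

lemma mul_rpow_le_rpow_sub_one_mul {p B s c : ℝ} (hp : p ≤ 2) (hB : 0 < B)
    (hs : s ^ 2 ≤ B * c) :
    (p - 1) * B ^ ((p - 2) / 2) * c ≤ B ^ ((p - 2) / 2 - 1) * ((p - 2) * s ^ 2 + B * c) := by
  have hBe := rpow_pos_of_pos hB ((p - 2) / 2)
  rw [rpow_sub_one hB.ne', div_mul_eq_mul_div, le_div_iff₀ hB]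
  have : (p - 1) * B * c ≤ (p - 2) * s ^ 2 + B * c := by nlinarith
  nlinarith

lemma le_inner_pLaplaceFlux_sub_of_ne_zero {p μ : ℝ} (hp₁ : 1 ≤ p) (hp₂ : p ≤ 2) (hμ : μ ≠ 0)
    (ξ η : E) :
    (p - 1) * (2 * μ ^ 2 + ‖ξ‖ ^ 2 + ‖η‖ ^ 2) ^ ((p - 2) / 2) * ‖ξ - η‖ ^ 2 ≤
      ⟪pLaplaceFlux p μ ξ - pLaplaceFlux p μ η, ξ - η⟫ := by
  set v := ξ - η
  set D := 2 * μ ^ 2 + ‖ξ‖ ^ 2 + ‖η‖ ^ 2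
  have hderiv := hasDerivAt_inner_pLaplaceFlux_line hμ p η v
  have hbound : ∀ t ∈ interior (Icc (0 : ℝ) 1),
      (p - 1) * D ^ ((p - 2) / 2) * ‖v‖ ^ 2 ≤
        deriv (fun t : ℝ => ⟪pLaplaceFlux p μ (η + t • v), v⟫) t := by
    intro t ht
    rw [interior_Icc] at ht
    rw [(hderiv t).deriv]
    set γ := η + t • v
    have hB : 0 < μ ^ 2 + ‖γ‖ ^ 2 := by positivity
    have hBD : μ ^ 2 + ‖γ‖ ^ 2 ≤ D := by
      have := norm_add_smul_sub_sq_le (x := η) (y := ξ) ht.1.le ht.2.le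
      linarith [sq_nonneg μ]
    have hCS : ⟪γ, v⟫ ^ 2 ≤ (μ ^ 2 + ‖γ‖ ^ 2) * ‖v‖ ^ 2 := by
      have := abs_real_inner_le_norm γ v
      rw [← sq_abs]
      nlinarith [abs_nonneg ⟪γ, v⟫, sq_nonneg μ, sq_nonneg ‖v‖, norm_nonneg γ, norm_nonneg v]
    calc (p - 1) * D ^ ((p - 2) / 2) * ‖v‖ ^ 2
        ≤ (p - 1) * (μ ^ 2 + ‖γ‖ ^ 2) ^ ((p - 2) / 2) * ‖v‖ ^ 2 := by
          have := rpow_le_rpow_of_nonpos hB hBD (by linarith : (p - 2) / 2 ≤ 0)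
          exact mul_le_mul_of_nonneg_right (mul_le_mul_of_nonneg_left this (by linarith))
            (sq_nonneg _)
      _ ≤ _ := mul_rpow_le_rpow_sub_one_mul hp₂ hB hCS
  have hmvt := (convex_Icc (0 : ℝ) 1).mul_sub_le_image_sub_of_le_deriv
    (fun t _ => (hderiv t).continuousAt.continuousWithinAt)
    (fun t _ => (hderiv t).differentiableAt.differentiableWithinAt) hbound
    0 (by simp) 1 (by simp) zero_le_one
  simpa [v, inner_sub_left] using hmvt

lemma le_inner_pLaplaceFlux_sub {p : ℝ} (hp₁ : 1 ≤ p) (hp₂ : p ≤ 2) (μ : ℝ) (ξ η : E) :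
    (p - 1) * (2 * μ ^ 2 + ‖ξ‖ ^ 2 + ‖η‖ ^ 2) ^ ((p - 2) / 2) * ‖ξ - η‖ ^ 2 ≤
      ⟪pLaplaceFlux p μ ξ - pLaplaceFlux p μ η, ξ - η⟫ := by
  rcases ne_or_eq μ 0 with hμ | rfl
  · exact le_inner_pLaplaceFlux_sub_of_ne_zero hp₁ hp₂ hμ ξ η
  rcases eq_or_ne ξ η with rfl | hξη
  · simp
  have hK : 0 < ‖ξ‖ ^ 2 + ‖η‖ ^ 2 := by
    have : ξ ≠ 0 ∨ η ≠ 0 := by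
      contrapose! hξη
      rw [hξη.1, hξη.2]
    rcases this with h | h <;> have := norm_pos_iff.2 h <;> positivity
  have hlhs : Continuous fun s : ℝ => ⟪pLaplaceFlux p s ξ - pLaplaceFlux p s η, ξ - η⟫ := by
    have := continuous_pLaplaceFlux_param p ξ
    have := continuous_pLaplaceFlux_param p η
    fun_prop
  have hrhs : ContinuousAt
      (fun s : ℝ => (p - 1) * (2 * s ^ 2 + ‖ξ‖ ^ 2 + ‖η‖ ^ 2) ^ ((p - 2) / 2) * ‖ξ - η‖ ^ 2) 0 := by
    refine ContinuousAt.mul (ContinuousAt.mul continuousAt_const ?_) continuousAt_const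
    have hbase : Continuous fun s : ℝ => 2 * s ^ 2 + ‖ξ‖ ^ 2 + ‖η‖ ^ 2 := by fun_prop
    exact hbase.continuousAt.rpow_const (Or.inl (by simpa using hK.ne'))
  refine le_of_tendsto_of_tendsto (b := 𝓝[≠] 0) (hrhs.tendsto.mono_left nhdsWithin_le_nhds)
    (hlhs.continuousAt.tendsto.mono_left nhdsWithin_le_nhds) ?_
  filter_upwards [self_mem_nhdsWithin] with s hs
  exact le_inner_pLaplaceFlux_sub_of_ne_zero hp₁ hp₂ hs ξ η

theorem stmt_5_general (m : ℕ) (p : ℝ) (hp1 : 1 < p) (hp2 : p ≤ 2) (μ : ℝ)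
    (ξ η : EuclideanSpace ℝ (Fin m)) :
    (inner ℝ (((μ ^ 2 + ‖ξ‖ ^ 2) ^ ((p - 2) / 2)) • ξ -
        ((μ ^ 2 + ‖η‖ ^ 2) ^ ((p - 2) / 2)) • η) (ξ - η) : ℝ) ≥
      (p - 1) * (2 * μ ^ 2 + ‖ξ‖ ^ 2 + ‖η‖ ^ 2) ^ ((p - 2) / 2) * ‖ξ - η‖ ^ 2 :=
  le_inner_pLaplaceFlux_sub hp1.le hp2 μ ξ η

theorem stmt_5 (m : ℕ) (p : ℝ) (hp1 : 1 < p) (hp2 : p ≤ 2) (μ : ℝ)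
    (ξ η : EuclideanSpace ℝ (Fin m)) (hne : ¬(μ = 0 ∧ ξ = 0 ∧ η = 0)) :
    (inner ℝ (((μ ^ 2 + ‖ξ‖ ^ 2) ^ ((p - 2) / 2)) • ξ -
        ((μ ^ 2 + ‖η‖ ^ 2) ^ ((p - 2) / 2)) • η) (ξ - η) : ℝ) ≥
      (p - 1) * (2 * μ ^ 2 + ‖ξ‖ ^ 2 + ‖η‖ ^ 2) ^ ((p - 2) / 2) * ‖ξ - η‖ ^ 2 :=
  stmt_5_general m p hp1 hp2 μ ξ η
end

section
/- For every real number p with 2 ≤ p, every p⁺ ≥ p, every μ ∈ ℝ, and all vectors ξ, η in ℝ^m, |ξ − η|^p ≤ 2^{p⁺} |(μ²+|ξ|²)^{(p-2)/4} ξ − (μ²+|η|²)^{(p-2)/4} η|². -/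
open Real
set_option maxHeartbeats 1000000

private lemma sq_rpow' (x : ℝ) (hx : 0 ≤ x) (e : ℝ) : (x ^ 2 : ℝ) ^ e = x ^ (2 * e) := by
  rw [← Real.rpow_natCast x 2, ← Real.rpow_mul hx]
  norm_num

private lemma scalar_key (μ p s t c : ℝ) (hp : 2 ≤ p) (ht : 0 ≤ t) (hts : t ≤ s)
    (hc1 : c ≤ s * t) (hc2 : -(s * t) ≤ c) :
    (s ^ 2 + t ^ 2 - 2 * c) ^ (p / 2) ≤
      2 ^ p * (((μ ^ 2 + s ^ 2) ^ ((p - 2) / 4)) ^ 2 * s ^ 2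
        + ((μ ^ 2 + t ^ 2) ^ ((p - 2) / 4)) ^ 2 * t ^ 2
        - 2 * ((μ ^ 2 + s ^ 2) ^ ((p - 2) / 4)) * ((μ ^ 2 + t ^ 2) ^ ((p - 2) / 4)) * c) := by
  have hs : 0 ≤ s := ht.trans hts
  have hp2 : (0:ℝ) < p / 2 := by linarith
  have hp2' : (0:ℝ) ≤ p / 2 - 1 := by linarith
  set q : ℝ := (p - 2) / 4 with hqdef
  have hq : 0 ≤ q := by rw [hqdef]; linarith
  set a : ℝ := (μ ^ 2 + s ^ 2) ^ q with hadef
  set b : ℝ := (μ ^ 2 + t ^ 2) ^ q with hbdef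
  have ha : 0 ≤ a := Real.rpow_nonneg (by positivity) q
  have hb : 0 ≤ b := Real.rpow_nonneg (by positivity) q
  have hba : b ≤ a := Real.rpow_le_rpow (by positivity) (by nlinarith) hq
  have h2p : (0:ℝ) < 2 ^ p := Real.rpow_pos_of_pos (by norm_num) p
  -- s = 0 case
  rcases eq_or_lt_of_le hs with hs0 | hs0
  · have hts0 : t = 0 := le_antisymm (hts.trans hs0.symm.le) ht
    have hc0 : c = 0 := by nlinarith
    rw [← hs0, hts0, hc0]
    have : ((0:ℝ) ^ 2 + 0 ^ 2 - 2 * 0) = 0 := by norm_num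
    rw [this, Real.zero_rpow (ne_of_gt hp2)]
    have : (0:ℝ) ≤ a ^ 2 * 0 ^ 2 + b ^ 2 * 0 ^ 2 - 2 * a * b * 0 := by norm_num
    nlinarith
  -- lower bounds via rpow of squares
  have hsa : s ^ ((p - 2) / 2) ≤ a := by
    calc s ^ ((p - 2) / 2) = (s ^ 2) ^ q := by
          rw [sq_rpow' s hs]; congr 1; rw [hqdef]; ring
      _ ≤ a := Real.rpow_le_rpow (by positivity) (by nlinarith [sq_nonneg μ]) hq
  have htb : t ^ ((p - 2) / 2) ≤ b := by
    calc t ^ ((p - 2) / 2) = (t ^ 2) ^ q := by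
          rw [sq_rpow' t ht]; congr 1; rw [hqdef]; ring
      _ ≤ b := Real.rpow_le_rpow (by positivity) (by nlinarith [sq_nonneg μ]) hq
  have hab : (s * t) ^ ((p - 2) / 2) ≤ a * b := by
    rw [Real.mul_rpow hs ht]
    exact mul_le_mul hsa htb (Real.rpow_nonneg ht _) ha
  -- superadditivity: a*s - b*t ≥ (s-t)^(p/2)
  have key1 : (s - t) ^ (p / 2) + b * t ≤ a * s := by
    set u : ℝ := s - t with hudef
    have hu : 0 ≤ u := by rw [hudef]; linarith
    have h1 : (μ ^ 2 + u ^ 2) ^ q * u ≤ a * u := by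
      apply mul_le_mul_of_nonneg_right _ hu
      exact Real.rpow_le_rpow (by positivity) (by nlinarith) hq
    have h2 : u ^ (p / 2) ≤ (μ ^ 2 + u ^ 2) ^ q * u := by
      rcases eq_or_lt_of_le hu with hu0 | hu0
      · rw [← hu0, Real.zero_rpow (ne_of_gt hp2)]
        simp
      · have hmono : u ^ ((p - 2) / 2) ≤ (μ ^ 2 + u ^ 2) ^ q := by
          calc u ^ ((p - 2) / 2) = (u ^ 2) ^ q := by
                rw [sq_rpow' u hu]; congr 1; rw [hqdef]; ring
            _ ≤ _ := Real.rpow_le_rpow (by positivity) (by nlinarith [sq_nonneg μ]) hq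
        calc u ^ (p / 2) = u ^ ((p - 2) / 2) * u := by
              rw [← Real.rpow_add_one (ne_of_gt hu0)]; congr 1; ring
          _ ≤ (μ ^ 2 + u ^ 2) ^ q * u := mul_le_mul_of_nonneg_right hmono hu
    have h3 : b * t ≤ a * t := mul_le_mul_of_nonneg_right hba ht
    have heq : a * s = a * t + a * u := by rw [hudef]; ring
    have := h2.trans h1
    linarith
  have hpow0 : 0 ≤ (s - t) ^ (p / 2) := Real.rpow_nonneg (by linarith) _
  have h2' : (s - t) ^ (p / 2) ≤ a * s - b * t := by
    have := mul_nonneg hb ht; linarith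
  have habt : 0 ≤ a * s - b * t := le_trans hpow0 h2'
  have keyX : (s - t) ^ p ≤ (a * s - b * t) ^ 2 := by
    calc (s - t) ^ p = ((s - t) ^ (p / 2)) ^ 2 := by
          rw [← Real.rpow_natCast ((s - t) ^ (p / 2)) 2,
            ← Real.rpow_mul (by linarith : (0:ℝ) ≤ s - t)]
          congr 1; norm_num
      _ ≤ (a * s - b * t) ^ 2 := pow_le_pow_left₀ hpow0 h2' 2
  rcases le_total c 0 with hcneg | hcpos
  · -- c ≤ 0 case
    have hL : s ^ 2 + t ^ 2 - 2 * c ≤ (2 * s) ^ 2 := by nlinarith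
    have e : s ^ p = (s ^ ((p - 2) / 2)) ^ 2 * s ^ 2 := by
      rw [show p = (p - 2) / 2 + ((p - 2) / 2 + (1 + 1)) by ring, Real.rpow_add hs0,
        Real.rpow_add hs0, Real.rpow_add hs0, Real.rpow_one]
      ring
    have hsp : s ^ p ≤ a ^ 2 * s ^ 2 := by
      rw [e]
      exact mul_le_mul_of_nonneg_right (pow_le_pow_left₀ (Real.rpow_nonneg hs _) hsa 2)
        (sq_nonneg s)
    calc (s ^ 2 + t ^ 2 - 2 * c) ^ (p / 2) ≤ ((2 * s) ^ 2) ^ (p / 2) :=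
          Real.rpow_le_rpow (by nlinarith) hL (le_of_lt hp2)
      _ = (2 * s) ^ p := by rw [sq_rpow' _ (by positivity)]; congr 1; ring
      _ = 2 ^ p * s ^ p := Real.mul_rpow (by norm_num) hs
      _ ≤ _ := by
          apply mul_le_mul_of_nonneg_left _ (le_of_lt h2p)
          have h1 : 0 ≤ b ^ 2 * t ^ 2 := by positivity
          have h2 : 0 ≤ -(2 * a * b * c) := by
            have : 0 ≤ a * b := mul_nonneg ha hb
            nlinarith
          linarith
  · -- 0 ≤ c case
    set X : ℝ := (s - t) ^ 2 with hXdef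
    set Y : ℝ := 2 * (s * t - c) with hYdef
    have hX : 0 ≤ X := sq_nonneg _
    have hY : 0 ≤ Y := by rw [hYdef]; linarith
    have hY2 : Y ≤ 2 * (s * t) := by rw [hYdef]; linarith
    have id1 : s ^ 2 + t ^ 2 - 2 * c = X + Y := by rw [hXdef, hYdef]; ring
    have id2 : a ^ 2 * s ^ 2 + b ^ 2 * t ^ 2 - 2 * a * b * c
        = (a * s - b * t) ^ 2 + a * b * Y := by rw [hYdef]; ring
    have habY : 0 ≤ a * b * Y := mul_nonneg (mul_nonneg ha hb) hY
    have keyY : Y ^ (p / 2) ≤ 2 ^ (p / 2 - 1) * (a * b * Y) := by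
      rcases eq_or_lt_of_le hY with hY0 | hY0
      · rw [← hY0, Real.zero_rpow (ne_of_gt hp2)]
        positivity
      · have e2 : Y ^ (p / 2 - 1) ≤ (2 * (s * t)) ^ (p / 2 - 1) :=
          Real.rpow_le_rpow hY hY2 hp2'
        have e3 : (2 * (s * t)) ^ (p / 2 - 1) = 2 ^ (p / 2 - 1) * (s * t) ^ (p / 2 - 1) :=
          Real.mul_rpow (by norm_num) (mul_nonneg hs ht)
        have e4 : (s * t) ^ (p / 2 - 1) ≤ a * b := by
          have h : (p - 2) / 2 = p / 2 - 1 := by ring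
          rw [← h]; exact hab
        have h2 : (0:ℝ) ≤ 2 ^ (p / 2 - 1) := Real.rpow_nonneg (by norm_num) _
        calc Y ^ (p / 2) = Y ^ (p / 2 - 1) * Y := by
              rw [← Real.rpow_add_one (ne_of_gt hY0)]; congr 1; ring
          _ ≤ 2 ^ (p / 2 - 1) * (a * b) * Y := by
              apply mul_le_mul_of_nonneg_right _ hY
              calc Y ^ (p / 2 - 1) ≤ 2 ^ (p / 2 - 1) * (s * t) ^ (p / 2 - 1) := e2.trans_eq e3
                _ ≤ 2 ^ (p / 2 - 1) * (a * b) := mul_le_mul_of_nonneg_left e4 h2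
          _ = 2 ^ (p / 2 - 1) * (a * b * Y) := by ring
    have hXp : X ^ (p / 2) ≤ (a * s - b * t) ^ 2 := by
      calc X ^ (p / 2) = (s - t) ^ p := by
            rw [hXdef, sq_rpow' _ (by linarith : (0:ℝ) ≤ s - t)]; congr 1; ring
        _ ≤ _ := keyX
    have h2half : (2:ℝ) ^ (p / 2) ≤ 2 ^ p :=
      Real.rpow_le_rpow_of_exponent_le (by norm_num) (by linarith)
    have h2halfpos : (0:ℝ) ≤ (2:ℝ) ^ (p / 2) := Real.rpow_nonneg (by norm_num) _
    rw [id1, id2]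
    rcases le_total Y X with hYX | hXY
    · calc (X + Y) ^ (p / 2) ≤ (2 * X) ^ (p / 2) :=
            Real.rpow_le_rpow (by linarith) (by linarith) (le_of_lt hp2)
        _ = 2 ^ (p / 2) * X ^ (p / 2) := Real.mul_rpow (by norm_num) hX
        _ ≤ 2 ^ p * (a * s - b * t) ^ 2 :=
            mul_le_mul h2half hXp (Real.rpow_nonneg hX _) (le_of_lt h2p)
        _ ≤ _ := mul_le_mul_of_nonneg_left (by linarith) (le_of_lt h2p)
    · calc (X + Y) ^ (p / 2) ≤ (2 * Y) ^ (p / 2) :=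
            Real.rpow_le_rpow (by linarith) (by linarith) (le_of_lt hp2)
        _ = 2 ^ (p / 2) * Y ^ (p / 2) := Real.mul_rpow (by norm_num) hY
        _ ≤ 2 ^ (p / 2) * (2 ^ (p / 2 - 1) * (a * b * Y)) :=
            mul_le_mul_of_nonneg_left keyY h2halfpos
        _ = 2 ^ (p - 1) * (a * b * Y) := by
            rw [← mul_assoc, ← Real.rpow_add (by norm_num : (0:ℝ) < 2)]; congr 2; ring
        _ ≤ 2 ^ p * (a * b * Y) := by
            apply mul_le_mul_of_nonneg_right _ habY
            exact Real.rpow_le_rpow_of_exponent_le (by norm_num) (by linarith)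
        _ ≤ _ := mul_le_mul_of_nonneg_left (by nlinarith [sq_nonneg (a * s - b * t)])
            (le_of_lt h2p)

open scoped RealInnerProductSpace

theorem stmt_6 (m : ℕ) (p pPlus : ℝ) (hp : 2 ≤ p) (hpp : p ≤ pPlus) (μ : ℝ)
    (ξ η : EuclideanSpace ℝ (Fin m)) :
    ‖ξ - η‖ ^ p ≤
      (2 : ℝ) ^ pPlus *
        ‖((μ ^ 2 + ‖ξ‖ ^ 2) ^ ((p - 2) / 4)) • ξ -
            ((μ ^ 2 + ‖η‖ ^ 2) ^ ((p - 2) / 4)) • η‖ ^ 2 := by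
  have key : ∀ ξ η : EuclideanSpace ℝ (Fin m), ‖η‖ ≤ ‖ξ‖ →
      ‖ξ - η‖ ^ p ≤
        (2 : ℝ) ^ pPlus *
          ‖((μ ^ 2 + ‖ξ‖ ^ 2) ^ ((p - 2) / 4)) • ξ -
              ((μ ^ 2 + ‖η‖ ^ 2) ^ ((p - 2) / 4)) • η‖ ^ 2 := by
    intro ξ η hle
    set a : ℝ := (μ ^ 2 + ‖ξ‖ ^ 2) ^ ((p - 2) / 4) with hadef
    set b : ℝ := (μ ^ 2 + ‖η‖ ^ 2) ^ ((p - 2) / 4) with hbdef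
    have ha : 0 ≤ a := Real.rpow_nonneg (by positivity) _
    have hb : 0 ≤ b := Real.rpow_nonneg (by positivity) _
    have hV : ‖a • ξ - b • η‖ ^ 2
        = a ^ 2 * ‖ξ‖ ^ 2 + b ^ 2 * ‖η‖ ^ 2 - 2 * a * b * ⟪ξ, η⟫ := by
      rw [@norm_sub_sq_real, norm_smul, norm_smul, real_inner_smul_left, real_inner_smul_right]
      simp [abs_of_nonneg ha, abs_of_nonneg hb, Real.norm_eq_abs, mul_pow]
      ring
    have hD : (‖ξ - η‖ : ℝ) ^ 2 = ‖ξ‖ ^ 2 + ‖η‖ ^ 2 - 2 * ⟪ξ, η⟫ := by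
      rw [@norm_sub_sq_real]; ring
    have hcs1 : ⟪ξ, η⟫ ≤ ‖ξ‖ * ‖η‖ := real_inner_le_norm ξ η
    have hcs2 : -(‖ξ‖ * ‖η‖) ≤ ⟪ξ, η⟫ := by
      have := abs_real_inner_le_norm ξ η
      have := neg_abs_le (⟪ξ, η⟫ : ℝ)
      linarith
    have hmain := scalar_key μ p ‖ξ‖ ‖η‖ ⟪ξ, η⟫ hp (norm_nonneg η) hle hcs1 hcs2
    have hL : ‖ξ - η‖ ^ p = ((‖ξ - η‖ : ℝ) ^ 2) ^ (p / 2) := by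
      rw [sq_rpow' _ (norm_nonneg _)]; congr 1; ring
    rw [hL, hD]
    refine le_trans hmain ?_
    rw [← hadef, ← hbdef]
    have hsq : 0 ≤ ‖a • ξ - b • η‖ ^ 2 := sq_nonneg _
    have h2 : (2:ℝ) ^ p ≤ 2 ^ pPlus :=
      Real.rpow_le_rpow_of_exponent_le (by norm_num) hpp
    calc 2 ^ p * (a ^ 2 * ‖ξ‖ ^ 2 + b ^ 2 * ‖η‖ ^ 2 - 2 * a * b * ⟪ξ, η⟫)
        = 2 ^ p * ‖a • ξ - b • η‖ ^ 2 := by rw [hV]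
      _ ≤ 2 ^ pPlus * ‖a • ξ - b • η‖ ^ 2 := mul_le_mul_of_nonneg_right h2 hsq
  rcases le_total ‖η‖ ‖ξ‖ with h | h
  · exact key ξ η h
  · have h2 := key η ξ h
    rwa [norm_sub_rev, norm_sub_rev
      (((μ ^ 2 + ‖η‖ ^ 2) ^ ((p - 2) / 4)) • η)] at h2
end

section
/- For every real number p > 1 and every μ ∈ ℝ, there exists a constant c = c(p) ≤ 2^{2p+2} such that for all ξ, η ∈ ℝ^m, |ξ|^p ≤ c|μ|^p + c|η|^p + c(μ² + |ξ|² + |η|²)^{(p-2)/2} |ξ − η|². -/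
set_option maxHeartbeats 1000000 in
theorem stmt_8 (m : ℕ) (p : ℝ) (hp : 1 < p) (μ : ℝ) :
    ∃ c : ℝ, 0 < c ∧ c ≤ (2 : ℝ) ^ (2 * p + 2) ∧
      ∀ ξ η : EuclideanSpace ℝ (Fin m),
        ‖ξ‖ ^ p ≤ c * |μ| ^ p + c * ‖η‖ ^ p +
          c * (μ ^ 2 + ‖ξ‖ ^ 2 + ‖η‖ ^ 2) ^ ((p - 2) / 2) * ‖ξ - η‖ ^ 2 := by
  refine ⟨(2:ℝ)^(2*p+2), Real.rpow_pos_of_pos two_pos _, le_refl _, ?_⟩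
  intro ξ η
  set c := (2:ℝ)^(2*p+2) with hc
  have hc16 : (16:ℝ) ≤ c := by
    have h4 : (16:ℝ) = (2:ℝ)^(4:ℝ) := by
      rw [show (4:ℝ) = ((4:ℕ):ℝ) by norm_num, Real.rpow_natCast]; norm_num
    rw [h4]
    exact Real.rpow_le_rpow_of_exponent_le one_le_two (by linarith)
  have hc2p : (2:ℝ)^p ≤ c := Real.rpow_le_rpow_of_exponent_le one_le_two (by linarith)
  set a := ‖ξ‖ with hadef
  set b := ‖η‖ with hbdef
  have ha : 0 ≤ a := norm_nonneg _
  have hb : 0 ≤ b := norm_nonneg _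
  set Q := μ^2 + a^2 + b^2 with hQ
  have hQ0 : 0 ≤ Q := by positivity
  have hd : a - b ≤ ‖ξ - η‖ := norm_sub_norm_le ξ η
  have hd0 : 0 ≤ ‖ξ - η‖ := norm_nonneg _
  have hp0 : 0 ≤ p := by linarith
  have hT1 : 0 ≤ c * |μ|^p := by positivity
  have hT2 : 0 ≤ c * b^p := by positivity
  have hT3 : 0 ≤ c * Q^((p-2)/2) * ‖ξ-η‖^2 := by positivity
  rcases le_or_gt a (2*b) with h1 | h1
  · have key : a^p ≤ c * b^p := by
      calc a^p ≤ (2*b)^p := Real.rpow_le_rpow ha h1 hp0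
        _ = 2^p * b^p := Real.mul_rpow (by norm_num) hb
        _ ≤ c * b^p := mul_le_mul_of_nonneg_right hc2p (Real.rpow_nonneg hb p)
    linarith
  · rcases le_or_gt a |μ| with h2 | h2
    · have key : a^p ≤ c * |μ|^p := by
        calc a^p ≤ |μ|^p := Real.rpow_le_rpow ha h2 hp0
          _ ≤ c * |μ|^p := le_mul_of_one_le_left (Real.rpow_nonneg (abs_nonneg μ) p)
              (by linarith)
      linarith
    · have ha0 : 0 < a := lt_of_le_of_lt (abs_nonneg μ) h2
      have hμa : μ^2 ≤ a^2 := by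
        have := sq_abs μ
        nlinarith [abs_nonneg μ]
      have hba : b^2 ≤ a^2 := by nlinarith
      have hsq : a^2/4 ≤ ‖ξ-η‖^2 := by nlinarith
      have hQpos : 0 < Q := by positivity
      -- (a^2)^((p-2)/2) = a^(p-2)
      have hsqpow : ∀ t : ℝ, 0 < t → ((t^2 : ℝ))^((p-2)/2) = t^(p-2) := by
        intro t ht
        rw [← Real.rpow_natCast t 2, ← Real.rpow_mul ht.le]
        congr 1; ring
      have hkey : (1/2) * a^(p-2) ≤ Q^((p-2)/2) := by
        rcases le_or_gt p 2 with hple | hpgt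
        · -- exponent ≤ 0, Q ≤ 4a^2
          have hQle : Q ≤ (2*a)^2 := by nlinarith
          have h1' : ((2*a)^2)^((p-2)/2) ≤ Q^((p-2)/2) :=
            Real.rpow_le_rpow_of_nonpos hQpos hQle (by linarith [div_nonpos_of_nonpos_of_nonneg (show p-2 ≤ 0 by linarith) (show (0:ℝ) ≤ 2 by norm_num)])
          have h2' : ((2*a)^2)^((p-2)/2) = (2*a)^(p-2) := hsqpow _ (by linarith)
          have h3' : (2*a)^(p-2) = 2^(p-2) * a^(p-2) := Real.mul_rpow (by norm_num) ha
          have h4' : (1/2 : ℝ) ≤ 2^(p-2) := by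
            have : (1/2 : ℝ) = 2^(-1 : ℝ) := by
              rw [Real.rpow_neg_one]; norm_num
            rw [this]
            exact Real.rpow_le_rpow_of_exponent_le one_le_two (by linarith)
          have h5' : (1/2) * a^(p-2) ≤ 2^(p-2) * a^(p-2) :=
            mul_le_mul_of_nonneg_right h4' (Real.rpow_nonneg ha _)
          rw [h2', h3'] at h1'
          linarith
        · -- exponent ≥ 0, Q ≥ a^2
          have hQge : a^2 ≤ Q := by nlinarith
          have h1' : (a^2)^((p-2)/2) ≤ Q^((p-2)/2) :=
            Real.rpow_le_rpow (by positivity) hQge (by linarith)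
          have h2' : (a^2)^((p-2)/2) = a^(p-2) := hsqpow a ha0
          rw [h2'] at h1'
          have := Real.rpow_nonneg ha (p-2)
          linarith
      have hmul : a^(p-2) * a^2 = a^p := by
        rw [← Real.rpow_natCast a 2, ← Real.rpow_add ha0]
        norm_num
      have key : a^p ≤ 8 * (Q^((p-2)/2) * ‖ξ-η‖^2) := by
        have h6 : (1/2) * a^(p-2) * (a^2/4) ≤ Q^((p-2)/2) * ‖ξ-η‖^2 :=
          mul_le_mul hkey hsq (by positivity) (Real.rpow_nonneg hQ0 _)
        have h7 : (1/2) * a^(p-2) * (a^2/4) = a^p / 8 := by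
          rw [show (1/2 : ℝ) * a^(p-2) * (a^2/4) = (a^(p-2) * a^2)/8 by ring, hmul]
        linarith
      have hfin : a^p ≤ c * Q^((p-2)/2) * ‖ξ-η‖^2 := by
        have h8 : 8 * (Q^((p-2)/2) * ‖ξ-η‖^2) ≤ c * (Q^((p-2)/2) * ‖ξ-η‖^2) :=
          mul_le_mul_of_nonneg_right (by linarith) (by positivity)
        calc a^p ≤ 8 * (Q^((p-2)/2) * ‖ξ-η‖^2) := key
          _ ≤ c * (Q^((p-2)/2) * ‖ξ-η‖^2) := h8
          _ = c * Q^((p-2)/2) * ‖ξ-η‖^2 := by ring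
      linarith
end

section
/- Let 1 < p⁻ ≤ p⁺ < ∞. Then there exists a constant C = C(p⁻, p⁺) > 0 such that for all p ∈ [p⁻, p⁺], all μ ∈ ℝ, and all ξ, η ∈ ℝ^m, |ξ|^p ≤ C(|μ|^p + |η|^p + ⟨(μ²+|ξ|²)^{(p-2)/2} ξ − (μ²+|η|²)^{(p-2)/2} η, ξ − η⟩). -/
/-!
Write `s = |ξ|`, `t = |η|` and `φ(s) = s (μ² + s²)^((p-2)/2)`. By Cauchy–Schwarz the monotonicity
term is at least `(φ(s) - φ(t)) (s - t)`, which is nonnegative because `φ` is increasing on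
`[0, ∞)`. Fix `K ≥ 2` with `K^(p-1) ≥ 2` for all `p ≥ p⁻`. If `s ≤ K t` or `s ≤ K |μ|`, then
`s^p ≤ K^p (|μ|^p + t^p)`. Otherwise `t` and `|μ|` are small compared with `s`: then
`φ(s) ≥ s^(p-1) / 2`, and the scaling bound `φ(c s) ≤ max(c, c^(p-1)) φ(s)` for `c ≤ 1` gives
`φ(t) ≤ φ(s) / 2`, so the monotonicity term is at least `s^p / 8`.
-/

open Real

theorem sq_rpow_half {x : ℝ} (hx : 0 ≤ x) (e : ℝ) : (x ^ 2) ^ (e / 2) = x ^ e := by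
  rw [← rpow_natCast, ← rpow_mul hx]
  congr 1
  push_cast
  ring

theorem mul_sub_mul_norm_le_inner_smul_sub_smul {E : Type*} [NormedAddCommGroup E]
    [InnerProductSpace ℝ E] {a b : ℝ} (ha : 0 ≤ a) (hb : 0 ≤ b) (x y : E) :
    (‖x‖ * a - ‖y‖ * b) * (‖x‖ - ‖y‖) ≤ inner ℝ (a • x - b • y) (x - y) := by
  have hxy : inner ℝ x y ≤ ‖x‖ * ‖y‖ := real_inner_le_norm x y
  have hexpand : inner ℝ (a • x - b • y) (x - y)
      = a * ‖x‖ ^ 2 + b * ‖y‖ ^ 2 - (a + b) * inner ℝ x y := by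
    simp only [inner_sub_left, inner_sub_right, real_inner_smul_left,
      real_inner_self_eq_norm_sq, real_inner_comm x y]
    ring
  rw [hexpand]
  nlinarith [mul_le_mul_of_nonneg_left hxy (add_nonneg ha hb)]

/-- The radial profile of `A(ξ) = (μ² + |ξ|²)^((p-2)/2) ξ`: `|A(ξ)| = pLaplaceRadial p μ |ξ|`. -/
noncomputable def pLaplaceRadial (p μ s : ℝ) : ℝ := s * (μ ^ 2 + s ^ 2) ^ ((p - 2) / 2)

section pLaplaceRadial

variable {p μ s t : ℝ}

theorem pLaplaceRadial_nonneg (hs : 0 ≤ s) : 0 ≤ pLaplaceRadial p μ s := by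
  unfold pLaplaceRadial; positivity

theorem pLaplaceRadial_mul_le {c : ℝ} (hc0 : 0 ≤ c) (hc1 : c ≤ 1) (hs : 0 ≤ s) :
    pLaplaceRadial p μ (c * s) ≤ max c (c ^ (p - 1)) * pLaplaceRadial p μ s := by
  have hrhs : 0 ≤ max c (c ^ (p - 1)) * pLaplaceRadial p μ s :=
    mul_nonneg (le_max_of_le_left hc0) (pLaplaceRadial_nonneg hs)
  rcases (mul_nonneg hc0 hs).eq_or_lt with hcs | hcs
  · simpa [← hcs, pLaplaceRadial] using hrhs
  have hc : 0 < c := pos_of_mul_pos_left hcs hs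
  have hs' : 0 < s := pos_of_mul_pos_right hcs hc0
  unfold pLaplaceRadial
  rcases le_total 2 p with hp | hp
  · have hbase : μ ^ 2 + (c * s) ^ 2 ≤ μ ^ 2 + s ^ 2 := by
      gcongr; nlinarith [mul_le_of_le_one_left hs hc1]
    calc c * s * (μ ^ 2 + (c * s) ^ 2) ^ ((p - 2) / 2)
        ≤ c * (s * (μ ^ 2 + s ^ 2) ^ ((p - 2) / 2)) := by
          rw [mul_assoc]; gcongr
      _ ≤ _ := by gcongr; exact le_max_left _ _
  · have hbase : c ^ 2 * (μ ^ 2 + s ^ 2) ≤ μ ^ 2 + (c * s) ^ 2 := by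
      nlinarith [mul_le_of_le_one_left (sq_nonneg μ) (pow_le_one₀ hc0 hc1 (n := 2))]
    calc c * s * (μ ^ 2 + (c * s) ^ 2) ^ ((p - 2) / 2)
        ≤ c * s * (c ^ 2 * (μ ^ 2 + s ^ 2)) ^ ((p - 2) / 2) := by
          refine mul_le_mul_of_nonneg_left ?_ (by positivity)
          exact rpow_le_rpow_of_nonpos (by positivity) hbase (by linarith)
      _ = c ^ (p - 1) * (s * (μ ^ 2 + s ^ 2) ^ ((p - 2) / 2)) := by
          rw [mul_rpow (by positivity) (by positivity), sq_rpow_half hc.le,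
            rpow_sub_one hc.ne', rpow_sub hc, rpow_two]
          field_simp
      _ ≤ _ := by gcongr; exact le_max_right _ _

theorem pLaplaceRadial_monotoneOn (hp : 1 ≤ p) : MonotoneOn (pLaplaceRadial p μ) (Set.Ici 0) := by
  intro t ht s hs hts
  rcases (Set.mem_Ici.mp hs).eq_or_lt with h0 | hs0
  · rw [show t = s by linarith [Set.mem_Ici.mp ht]]
  have hc1 : t / s ≤ 1 := div_le_one_of_le₀ hts hs0.le
  calc pLaplaceRadial p μ t = pLaplaceRadial p μ (t / s * s) := by field_simp
    _ ≤ max (t / s) ((t / s) ^ (p - 1)) * pLaplaceRadial p μ s :=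
      pLaplaceRadial_mul_le (div_nonneg ht hs0.le) hc1 hs0.le
    _ ≤ pLaplaceRadial p μ s := by
      refine mul_le_of_le_one_left (pLaplaceRadial_nonneg hs0.le) (max_le hc1 ?_)
      exact rpow_le_one (div_nonneg ht hs0.le) hc1 (by linarith)

theorem half_rpow_sub_one_le_pLaplaceRadial (hp : 0 ≤ p) (hs : 0 < s) (hμ : |μ| ≤ s) :
    s ^ (p - 1) / 2 ≤ pLaplaceRadial p μ s := by
  have hsp : s ^ (p - 1) = s * (s ^ 2) ^ ((p - 2) / 2) := by
    rw [sq_rpow_half hs.le, rpow_sub_one hs.ne', rpow_sub hs, rpow_two]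
    field_simp
  unfold pLaplaceRadial
  rw [hsp, mul_div_assoc]
  gcongr
  rcases le_total 2 p with hp2 | hp2
  · calc (s ^ 2) ^ ((p - 2) / 2) / 2 ≤ (s ^ 2) ^ ((p - 2) / 2) := by
          linarith [rpow_nonneg (sq_nonneg s) ((p - 2) / 2)]
      _ ≤ _ := rpow_le_rpow (sq_nonneg s) (by nlinarith) (by linarith)
  · have h2 : (1 : ℝ) / 2 ≤ 2 ^ ((p - 2) / 2) := by
      have := rpow_le_rpow_of_exponent_le (by norm_num : (1 : ℝ) ≤ 2)
        (by linarith : (-1 : ℝ) ≤ (p - 2) / 2)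
      rwa [rpow_neg_one, ← one_div] at this
    have hμs : μ ^ 2 + s ^ 2 ≤ 2 * s ^ 2 := by nlinarith [sq_abs μ, abs_nonneg μ]
    calc (s ^ 2) ^ ((p - 2) / 2) / 2 ≤ 2 ^ ((p - 2) / 2) * (s ^ 2) ^ ((p - 2) / 2) := by
          nlinarith [rpow_nonneg (sq_nonneg s) ((p - 2) / 2)]
      _ = (2 * s ^ 2) ^ ((p - 2) / 2) := (mul_rpow (by norm_num) (sq_nonneg s)).symm
      _ ≤ _ := rpow_le_rpow_of_nonpos (by positivity) hμs (by linarith)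

theorem pLaplaceRadial_sub_mul_sub_nonneg (hp : 1 ≤ p) (hs : 0 ≤ s) (ht : 0 ≤ t) :
    0 ≤ (pLaplaceRadial p μ s - pLaplaceRadial p μ t) * (s - t) := by
  have hmono := pLaplaceRadial_monotoneOn (μ := μ) hp
  rcases le_total t s with hts | hst
  · exact mul_nonneg (sub_nonneg.mpr (hmono ht hs hts)) (sub_nonneg.mpr hts)
  · exact mul_nonneg_of_nonpos_of_nonpos (sub_nonpos.mpr (hmono hs ht hst)) (sub_nonpos.mpr hst)

theorem rpow_le_mul_pLaplaceRadial_sub_mul_sub {K : ℝ} (hp : 1 < p) (ht : 0 ≤ t)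
    (hK : 2 ≤ K) (hKp : 2 ≤ K ^ (p - 1)) (hKt : K * t < s) (hKμ : K * |μ| < s) :
    s ^ p ≤ 8 * ((pLaplaceRadial p μ s - pLaplaceRadial p μ t) * (s - t)) := by
  have hs : 0 < s := lt_of_le_of_lt (by positivity) hKt
  have hts : t / s ≤ K⁻¹ := by
    rw [div_le_iff₀ hs, inv_mul_eq_div, le_div_iff₀ (by linarith)]
    linarith
  have hKinv : K⁻¹ ≤ 1 / 2 := by rw [one_div]; exact inv_anti₀ two_pos hK
  have hratio : max (t / s) ((t / s) ^ (p - 1)) ≤ 1 / 2 := by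
    refine max_le (hts.trans hKinv) ?_
    calc (t / s) ^ (p - 1) ≤ K⁻¹ ^ (p - 1) :=
          rpow_le_rpow (div_nonneg ht hs.le) hts (by linarith)
      _ = (K ^ (p - 1))⁻¹ := inv_rpow (by linarith) _
      _ ≤ 1 / 2 := by rw [one_div]; exact inv_anti₀ two_pos hKp
  have hφt : pLaplaceRadial p μ t ≤ pLaplaceRadial p μ s / 2 :=
    calc pLaplaceRadial p μ t = pLaplaceRadial p μ (t / s * s) := by field_simp
      _ ≤ max (t / s) ((t / s) ^ (p - 1)) * pLaplaceRadial p μ s :=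
        pLaplaceRadial_mul_le (div_nonneg ht hs.le) (hts.trans (by linarith)) hs.le
      _ ≤ 1 / 2 * pLaplaceRadial p μ s :=
        mul_le_mul_of_nonneg_right hratio (pLaplaceRadial_nonneg hs.le)
      _ = pLaplaceRadial p μ s / 2 := by ring
  have hφs : s ^ (p - 1) / 2 ≤ pLaplaceRadial p μ s :=
    half_rpow_sub_one_le_pLaplaceRadial (by linarith) hs (by nlinarith [abs_nonneg μ])
  have hgap : s ^ (p - 1) / 4 ≤ pLaplaceRadial p μ s - pLaplaceRadial p μ t := by linarith
  calc s ^ p = 8 * (s ^ (p - 1) / 4 * (s / 2)) := by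
        rw [rpow_sub_one hs.ne']; field_simp; norm_num
    _ ≤ _ := by
      have hsp : 0 ≤ s ^ (p - 1) / 4 := by positivity
      gcongr 8 * ?_
      exact mul_le_mul hgap (by nlinarith) (by positivity) (hsp.trans hgap)

theorem rpow_le_mul_add_mul_pLaplaceRadial_sub_mul_sub {K : ℝ} (hp : 1 < p) (hs : 0 ≤ s)
    (ht : 0 ≤ t) (hK : 2 ≤ K) (hKp : 2 ≤ K ^ (p - 1)) :
    s ^ p ≤ K ^ p * (|μ| ^ p + t ^ p) +
      8 * ((pLaplaceRadial p μ s - pLaplaceRadial p μ t) * (s - t)) := by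
  have hgap := pLaplaceRadial_sub_mul_sub_nonneg (μ := μ) hp.le hs ht
  have hK0 : 0 ≤ K := by linarith
  by_cases hlarge : K * t < s ∧ K * |μ| < s
  · have hKsum : 0 ≤ K ^ p * (|μ| ^ p + t ^ p) := by positivity
    linarith [rpow_le_mul_pLaplaceRadial_sub_mul_sub hp ht hK hKp hlarge.1 hlarge.2]
  rw [not_and_or, not_lt, not_lt] at hlarge
  suffices s ^ p ≤ K ^ p * (|μ| ^ p + t ^ p) by linarith
  rcases hlarge with h | h
  · calc s ^ p ≤ (K * t) ^ p := rpow_le_rpow hs h (by linarith)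
      _ = K ^ p * t ^ p := mul_rpow hK0 ht
      _ ≤ _ := by gcongr; exact le_add_of_nonneg_left (by positivity)
  · calc s ^ p ≤ (K * |μ|) ^ p := rpow_le_rpow hs h (by linarith)
      _ = K ^ p * |μ| ^ p := mul_rpow hK0 (abs_nonneg μ)
      _ ≤ _ := by gcongr; exact le_add_of_nonneg_right (by positivity)

end pLaplaceRadial

theorem exists_two_le_rpow_sub_one {q : ℝ} (hq : 1 < q) :
    ∃ K : ℝ, 2 ≤ K ∧ ∀ p, q ≤ p → 2 ≤ K ^ (p - 1) := by
  refine ⟨2 ^ (q / (q - 1)), ?_, fun p hp => ?_⟩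
  · conv_lhs => rw [← rpow_one 2]
    exact rpow_le_rpow_of_exponent_le one_le_two ((le_div_iff₀ (by linarith)).mpr (by linarith))
  · calc (2 : ℝ) = 2 ^ (1 : ℝ) := (rpow_one 2).symm
      _ ≤ 2 ^ (q / (q - 1) * (p - 1)) := by
        refine rpow_le_rpow_of_exponent_le one_le_two ?_
        rw [div_mul_eq_mul_div, le_div_iff₀ (by linarith)]
        nlinarith
      _ = _ := rpow_mul zero_le_two _ _

theorem stmt_9_general (m : ℕ) (pm pp : ℝ) (h1 : 1 < pm) :
    ∃ C : ℝ, 0 < C ∧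
      ∀ p : ℝ, pm ≤ p → p ≤ pp →
        ∀ μ : ℝ, ∀ ξ η : EuclideanSpace ℝ (Fin m),
          ‖ξ‖ ^ p ≤
            C * (|μ| ^ p + ‖η‖ ^ p +
              (inner ℝ (((μ ^ 2 + ‖ξ‖ ^ 2) ^ ((p - 2) / 2)) • ξ -
                  ((μ ^ 2 + ‖η‖ ^ 2) ^ ((p - 2) / 2)) • η) (ξ - η) : ℝ)) := by
  obtain ⟨K, hK, hKp⟩ := exists_two_le_rpow_sub_one h1
  refine ⟨K ^ pp + 8, by positivity, fun p hpm hpp μ ξ η => ?_⟩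
  have hp : 1 < p := h1.trans_le hpm
  have hinner : (pLaplaceRadial p μ ‖ξ‖ - pLaplaceRadial p μ ‖η‖) * (‖ξ‖ - ‖η‖) ≤
      inner ℝ (((μ ^ 2 + ‖ξ‖ ^ 2) ^ ((p - 2) / 2)) • ξ -
        ((μ ^ 2 + ‖η‖ ^ 2) ^ ((p - 2) / 2)) • η) (ξ - η) :=
    mul_sub_mul_norm_le_inner_smul_sub_smul (by positivity) (by positivity) ξ η
  have hgap := pLaplaceRadial_sub_mul_sub_nonneg (μ := μ) hp.le (norm_nonneg ξ) (norm_nonneg η)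
  have hbound := rpow_le_mul_add_mul_pLaplaceRadial_sub_mul_sub (μ := μ) hp (norm_nonneg ξ)
    (norm_nonneg η) hK (hKp p hpm)
  have hKpp : K ^ p ≤ K ^ pp := rpow_le_rpow_of_exponent_le (by linarith) hpp
  have hsum : 0 ≤ |μ| ^ p + ‖η‖ ^ p := by positivity
  have hKpp0 : 0 ≤ K ^ pp := by positivity
  linarith [mul_le_mul_of_nonneg_right hKpp hsum, mul_nonneg hKpp0 (hgap.trans hinner)]

theorem stmt_9 (m : ℕ) (pm pp : ℝ) (h1 : 1 < pm) (h2 : pm ≤ pp) :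
    ∃ C : ℝ, 0 < C ∧
      ∀ p : ℝ, pm ≤ p → p ≤ pp →
        ∀ μ : ℝ, ∀ ξ η : EuclideanSpace ℝ (Fin m),
          ‖ξ‖ ^ p ≤
            C * (|μ| ^ p + ‖η‖ ^ p +
              (inner ℝ (((μ ^ 2 + ‖ξ‖ ^ 2) ^ ((p - 2) / 2)) • ξ -
                  ((μ ^ 2 + ‖η‖ ^ 2) ^ ((p - 2) / 2)) • η) (ξ - η) : ℝ)) :=
  stmt_9_general m pm pp h1
end

section
/- (First Clarkson inequality, scalar form) For every real p ≥ 2 and every x ∈ [0,1], ((1+x)/2)^p + ((1−x)/2)^p ≤ (1 + x^p)/2. -/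
lemma aux_add_rpow_le_rpow_add (a b : ℝ) (ha : 0 ≤ a) (hb : 0 ≤ b) {q : ℝ} (hq : 1 ≤ q) :
    a ^ q + b ^ q ≤ (a + b) ^ q := by
  have := NNReal.add_rpow_le_rpow_add ⟨a, ha⟩ ⟨b, hb⟩ hq
  have h2 := (NNReal.coe_le_coe).2 this
  push_cast [NNReal.coe_rpow] at h2
  exact h2

lemma aux_convex (u v : ℝ) (hu : 0 ≤ u) (hv : 0 ≤ v) {q : ℝ} (hq : 1 ≤ q) :
    ((u + v) / 2) ^ q ≤ (u ^ q + v ^ q) / 2 := by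
  have := NNReal.rpow_arith_mean_le_arith_mean2_rpow (1/2) (1/2) ⟨u, hu⟩ ⟨v, hv⟩ (add_halves 1) hq
  have h2 := (NNReal.coe_le_coe).2 this
  push_cast [NNReal.coe_rpow] at h2
  calc ((u + v) / 2) ^ q = ((1:ℝ)/2 * u + 1/2 * v) ^ q := by ring_nf
    _ ≤ 1/2 * u ^ q + 1/2 * v ^ q := h2
    _ = (u ^ q + v ^ q) / 2 := by ring

theorem stmt_11 (p x : ℝ) (hp : 2 ≤ p) (hx0 : 0 ≤ x) (hx1 : x ≤ 1) :
    ((1 + x) / 2) ^ p + ((1 - x) / 2) ^ p ≤ (1 + x ^ p) / 2 := by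
  set a : ℝ := (1 + x) / 2 with ha
  set b : ℝ := (1 - x) / 2 with hb
  have ha0 : 0 ≤ a := by positivity
  have hb0 : 0 ≤ b := by rw [hb]; linarith
  have hq : 1 ≤ p / 2 := by linarith
  have hkey : ∀ c : ℝ, 0 ≤ c → c ^ p = (c ^ (2:ℝ)) ^ (p / 2) := by
    intro c hc
    rw [← Real.rpow_mul hc]
    congr 1
    ring
  have hsq : ∀ c : ℝ, 0 ≤ c → c ^ (2:ℝ) = c * c := by
    intro c hc
    rw [show (2:ℝ) = ((2:ℕ):ℝ) by norm_num, Real.rpow_natCast]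
    ring
  have hone : (1:ℝ) ^ (p / 2) = 1 := Real.one_rpow _
  calc a ^ p + b ^ p = (a ^ (2:ℝ)) ^ (p/2) + (b ^ (2:ℝ)) ^ (p/2) := by
        rw [hkey a ha0, hkey b hb0]
    _ ≤ (a ^ (2:ℝ) + b ^ (2:ℝ)) ^ (p/2) :=
        aux_add_rpow_le_rpow_add _ _ (Real.rpow_nonneg ha0 _) (Real.rpow_nonneg hb0 _) hq
    _ = ((1 + x ^ (2:ℝ)) / 2) ^ (p/2) := by
        rw [hsq a ha0, hsq b hb0, hsq x hx0, ha, hb]; ring_nf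
    _ ≤ (1 ^ (p/2) + (x ^ (2:ℝ)) ^ (p/2)) / 2 :=
        aux_convex 1 (x ^ (2:ℝ)) one_pos.le (Real.rpow_nonneg hx0 _) hq
    _ = (1 + x ^ p) / 2 := by rw [hone, ← hkey x hx0]
end

section
/- (Second Clarkson inequality, scalar form) For every real p with 1 < p ≤ 2 and every x ∈ [0,1], (((1+x)/2)^{p/(p-1)} + ((1−x)/2)^{p/(p-1)})^{p-1} ≤ (1 + x^p)/2. -/
open Complex HadamardThreeLines Set

/-!
Hadamard's three-lines theorem, in the spirit of Riesz–Thorin. For `0 < b < a` put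
`A = a^p + b^p`, `S = (a+b)^q + (a-b)^q`, `w_c(z) = c (1 - z/2)`, and consider the entire
function `F z = (a^{w_p} + b^{w_p}) (a+b)^{w_q} + (a^{w_p} - b^{w_p}) (a-b)^{w_q}`.
On `re z = 0` the triangle inequality gives `‖F‖ ≤ A S`; on `re z = 1` Cauchy–Schwarz and the
parallelogram law give `‖F‖ ≤ √(2A) √S`. At `θ = 2/q` (in `[0, 1]` exactly because `p ≤ 2`)
the exponents become `w_p = 1`, `w_q = q - 1`, so `F θ = S`, and three lines yields
`S ≤ (A S)^(1-θ) (2 A S)^(θ/2)`, i.e. `S^(p-1) ≤ 2^(p-1) A`. The cases `b = 0`, `b = a`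
follow by continuity, and the theorem is the case `a = 1/2`, `b = x/2`.
-/

noncomputable section

/-- `x ^ w_c(z)` in the notation of the header. -/
def stripPow (x c : ℝ) (z : ℂ) : ℂ := (x : ℂ) ^ ((c : ℂ) * (1 - z / 2))

lemma differentiable_stripPow {x : ℝ} (hx : x ≠ 0) (c : ℝ) :
    Differentiable ℂ (stripPow x c) :=
  (by fun_prop : Differentiable ℂ fun z : ℂ ↦ (c : ℂ) * (1 - z / 2)).const_cpow
    (.inl (ofReal_ne_zero.2 hx))

lemma norm_stripPow {x : ℝ} (hx : 0 < x) (c : ℝ) (z : ℂ) :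
    ‖stripPow x c z‖ = x ^ (c * (1 - z.re / 2)) := by
  rw [stripPow, norm_cpow_eq_rpow_re_of_pos hx]
  simp

lemma stripPow_ofReal {x : ℝ} (hx : 0 ≤ x) (c t : ℝ) :
    stripPow x c t = ((x ^ (c * (1 - t / 2)) : ℝ) : ℂ) := by
  rw [stripPow, ofReal_cpow hx]
  push_cast
  rfl

lemma norm_stripPow_le {x c : ℝ} (hx : 0 < x) (hc : 0 ≤ c) {z : ℂ} (hz : z.re ∈ Icc 0 1) :
    ‖stripPow x c z‖ ≤ max (x ^ (c / 2)) (x ^ c) := by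
  rw [norm_stripPow hx]
  rcases le_total 1 x with h | h
  · exact le_max_of_le_right <| Real.rpow_le_rpow_of_exponent_le h <| by nlinarith [hz.1]
  · exact le_max_of_le_left <| Real.rpow_le_rpow_of_exponent_ge hx h <| by nlinarith [hz.2]

/-- The function `F` of the header. -/
def clarksonInterpolant (p q a b : ℝ) (z : ℂ) : ℂ :=
  (stripPow a p z + stripPow b p z) * stripPow (a + b) q z +
    (stripPow a p z - stripPow b p z) * stripPow (a - b) q z

section Interpolant

variable {p q a b : ℝ}

lemma differentiable_clarksonInterpolant (hb : 0 < b) (hba : b < a) :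
    Differentiable ℂ (clarksonInterpolant p q a b) := by
  have h : ∀ {x : ℝ} (c : ℝ), 0 < x → Differentiable ℂ (stripPow x c) :=
    fun c hx ↦ differentiable_stripPow hx.ne' c
  unfold clarksonInterpolant
  have := h p (hb.trans hba)
  have := h p hb
  have := h q (show 0 < a + b by linarith)
  have := h q (show 0 < a - b by linarith)
  fun_prop

lemma bddAbove_norm_clarksonInterpolant (hp : 0 ≤ p) (hq : 0 ≤ q) (hb : 0 < b)
    (hba : b < a) :
    BddAbove ((norm ∘ clarksonInterpolant p q a b) '' verticalClosedStrip 0 1) := by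
  set K : ℝ → ℝ → ℝ := fun x c ↦ max (x ^ (c / 2)) (x ^ c)
  have ha : 0 < a := hb.trans hba
  refine ⟨(K a p + K b p) * K (a + b) q + (K a p + K b p) * K (a - b) q, ?_⟩
  rintro _ ⟨z, hz, rfl⟩
  have hK : ∀ {x : ℝ} (c : ℝ), 0 < x → 0 ≤ c → ‖stripPow x c z‖ ≤ K x c :=
    fun c hx hc ↦ norm_stripPow_le hx hc hz
  have hsum : ‖stripPow a p z + stripPow b p z‖ ≤ K a p + K b p :=
    (norm_add_le _ _).trans (add_le_add (hK p ha hp) (hK p hb hp))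
  have hdiff : ‖stripPow a p z - stripPow b p z‖ ≤ K a p + K b p :=
    (norm_sub_le _ _).trans (add_le_add (hK p ha hp) (hK p hb hp))
  refine (norm_add_le _ _).trans (add_le_add ?_ ?_) <;> rw [norm_mul]
  · exact mul_le_mul hsum (hK q (by linarith) hq) (norm_nonneg _) (by positivity)
  · exact mul_le_mul hdiff (hK q (by linarith) hq) (norm_nonneg _) (by positivity)

lemma norm_clarksonInterpolant_le_of_re_eq_zero (hb : 0 < b) (hba : b < a) {z : ℂ}
    (hz : z.re = 0) :
    ‖clarksonInterpolant p q a b z‖ ≤ (a ^ p + b ^ p) * ((a + b) ^ q + (a - b) ^ q) := by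
  have hnorm : ∀ {x : ℝ} (c : ℝ), 0 < x → ‖stripPow x c z‖ = x ^ c := fun c hx ↦ by
    rw [norm_stripPow hx, hz]; norm_num
  have ha : 0 < a := hb.trans hba
  have hsum : ‖stripPow a p z + stripPow b p z‖ ≤ a ^ p + b ^ p :=
    (norm_add_le _ _).trans_eq (by rw [hnorm p ha, hnorm p hb])
  have hdiff : ‖stripPow a p z - stripPow b p z‖ ≤ a ^ p + b ^ p :=
    (norm_sub_le _ _).trans_eq (by rw [hnorm p ha, hnorm p hb])
  refine (norm_add_le _ _).trans ?_
  rw [norm_mul, norm_mul, hnorm q (by linarith : 0 < a + b), hnorm q (by linarith : 0 < a - b),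
    mul_add]
  gcongr

lemma norm_clarksonInterpolant_le_of_re_eq_one (hb : 0 < b) (hba : b < a) {z : ℂ}
    (hz : z.re = 1) :
    ‖clarksonInterpolant p q a b z‖ ≤
      √(2 * (a ^ p + b ^ p)) * √((a + b) ^ q + (a - b) ^ q) := by
  have hnorm : ∀ {x : ℝ} (c : ℝ), 0 < x → ‖stripPow x c z‖ ^ 2 = x ^ c := fun c hx ↦ by
    rw [norm_stripPow hx, hz, ← Real.rpow_natCast, ← Real.rpow_mul hx.le]; ring_nf
  have ha : 0 < a := hb.trans hba
  have hpar : ‖stripPow a p z + stripPow b p z‖ ^ 2 + ‖stripPow a p z - stripPow b p z‖ ^ 2 =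
      2 * (a ^ p + b ^ p) := by
    rw [parallelogram_law_with_norm ℝ, hnorm p ha, hnorm p hb]
  have hcs := Real.sum_mul_le_sqrt_mul_sqrt Finset.univ
    ![‖stripPow a p z + stripPow b p z‖, ‖stripPow a p z - stripPow b p z‖]
    ![‖stripPow (a + b) q z‖, ‖stripPow (a - b) q z‖]
  simp only [Fin.sum_univ_two, Matrix.cons_val_zero, Matrix.cons_val_one,
    hpar, hnorm q (by linarith : 0 < a + b), hnorm q (by linarith : 0 < a - b)] at hcs
  refine (norm_add_le _ _).trans ?_
  rwa [norm_mul, norm_mul]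

lemma clarksonInterpolant_two_div (hpq : p.HolderConjugate q) (hb : 0 ≤ b) (hba : b ≤ a) :
    clarksonInterpolant p q a b (2 / q : ℝ) = ((a + b) ^ q + (a - b) ^ q : ℝ) := by
  have hθ : 1 - 2 / q / 2 = 1 / p := by
    rw [div_div_cancel_left' two_ne_zero, one_div, hpq.symm.one_sub_inv]
  have hpq' : q * (1 / p) = q - 1 := by rw [mul_one_div, hpq.symm.div_conj_eq_sub_one]
  simp only [clarksonInterpolant, stripPow_ofReal (hb.trans hba), stripPow_ofReal hb,
    stripPow_ofReal (by linarith : 0 ≤ a + b), stripPow_ofReal (by linarith : 0 ≤ a - b), hθ,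
    mul_one_div_cancel hpq.ne_zero, Real.rpow_one, hpq']
  have hmul : ∀ {x : ℝ}, 0 ≤ x → x * x ^ (q - 1) = x ^ q := fun hx ↦ by
    rw [mul_comm, ← Real.rpow_add_one' hx (by simpa using hpq.symm.ne_zero), sub_add_cancel]
  push_cast [← hmul (by linarith : 0 ≤ a + b), ← hmul (by linarith : 0 ≤ a - b)]
  rfl

end Interpolant

theorem clarkson_scalar_of_pos {p q a b : ℝ} (hpq : p.HolderConjugate q) (hp2 : p ≤ 2)
    (hb : 0 < b) (hba : b < a) :
    ((a + b) ^ q + (a - b) ^ q) ^ (p - 1) ≤ 2 ^ (p - 1) * (a ^ p + b ^ p) := by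
  have hp := hpq.pos
  have ha := hb.trans hba
  set A := a ^ p + b ^ p
  set S := (a + b) ^ q + (a - b) ^ q
  have hA : 0 < A := by positivity
  have hS : 0 < S := by have := sub_pos.2 hba; positivity
  have hq_inv : q⁻¹ = 1 - p⁻¹ := hpq.one_sub_inv.symm
  have hθ : (2 / q : ℝ) ∈ Icc 0 1 := by
    refine ⟨by have := hpq.symm.pos; positivity, ?_⟩
    rw [div_eq_mul_inv, hq_inv]
    have : 1 / 2 ≤ p⁻¹ := by rw [one_div]; gcongr
    linarith
  have hinterp := norm_le_interp_of_mem_verticalClosedStrip₀₁' (clarksonInterpolant p q a b)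
    (z := (2 / q : ℝ)) (by simpa [verticalClosedStrip] using hθ)
    (differentiable_clarksonInterpolant hb hba).diffContOnCl
    (bddAbove_norm_clarksonInterpolant hpq.nonneg hpq.symm.nonneg hb hba)
    (fun _ hz ↦ norm_clarksonInterpolant_le_of_re_eq_zero hb hba hz)
    (fun _ hz ↦ norm_clarksonInterpolant_le_of_re_eq_one hb hba hz)
  rw [clarksonInterpolant_two_div hpq hb.le hba.le, norm_real, Real.norm_of_nonneg hS.le,
    ofReal_re, ← Real.sqrt_mul (by positivity), Real.sqrt_eq_rpow] at hinterp
  have hSp : S ^ p ≤ 2 ^ (p - 1) * A * S := calc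
    S ^ p ≤ ((A * S) ^ (1 - 2 / q) * ((2 * A * S) ^ (1 / 2 : ℝ)) ^ (2 / q)) ^ p :=
      Real.rpow_le_rpow hS.le hinterp hpq.nonneg
    _ = (A * S) ^ (2 - p) * (2 * (A * S)) ^ (p - 1) := by
      rw [Real.mul_rpow (by positivity) (by positivity), ← Real.rpow_mul (by positivity),
        ← Real.rpow_mul (by positivity), ← Real.rpow_mul (by positivity), mul_assoc 2]
      congr 2
      · rw [div_eq_mul_inv, hq_inv]; field_simp; ring
      · rw [← hpq.div_conj_eq_sub_one]; ring
    _ = 2 ^ (p - 1) * A * S := by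
      rw [Real.mul_rpow zero_le_two (by positivity), mul_left_comm,
        ← Real.rpow_add (by positivity)]
      norm_num [mul_assoc]
  rw [Real.rpow_sub_one hS.ne', div_le_iff₀ hS]
  exact hSp

theorem clarkson_scalar {p q a b : ℝ} (hpq : p.HolderConjugate q) (hp2 : p ≤ 2)
    (hb : 0 ≤ b) (hba : b ≤ a) :
    ((a + b) ^ q + (a - b) ^ q) ^ (p - 1) ≤ 2 ^ (p - 1) * (a ^ p + b ^ p) := by
  obtain rfl | ha := (hb.trans hba).eq_or_lt
  · obtain rfl := le_antisymm hba hb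
    simp [Real.zero_rpow hpq.ne_zero, Real.zero_rpow hpq.symm.ne_zero,
      Real.zero_rpow hpq.sub_one_ne_zero]
  have hclosed : IsClosed {b : ℝ | ((a + b) ^ q + (a - b) ^ q) ^ (p - 1) ≤
      2 ^ (p - 1) * (a ^ p + b ^ p)} := by
    have := Real.continuous_rpow_const hpq.nonneg
    have := Real.continuous_rpow_const hpq.symm.nonneg
    have := Real.continuous_rpow_const hpq.sub_one_pos.le
    refine isClosed_le ?_ ?_ <;> fun_prop
  have hmem : b ∈ closure (Ioo 0 a) := by
    rw [closure_Ioo ha.ne]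
    exact ⟨hb, hba⟩
  exact closure_minimal (fun _ hc ↦ clarkson_scalar_of_pos hpq hp2 hc.1 hc.2) hclosed hmem

end

theorem stmt_12 (p x : ℝ) (hp1 : 1 < p) (hp2 : p ≤ 2) (hx0 : 0 ≤ x) (hx1 : x ≤ 1) :
    (((1 + x) / 2) ^ (p / (p - 1)) + ((1 - x) / 2) ^ (p / (p - 1))) ^ (p - 1) ≤
      (1 + x ^ p) / 2 := by
  have hpq : p.HolderConjugate (p / (p - 1)) := .conjExponent hp1
  have h := clarkson_scalar hpq hp2 (by positivity : 0 ≤ x / 2) (by linarith : x / 2 ≤ 1 / 2)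
  have h2 : (2 : ℝ) ^ (p - 1) * ((1 / 2) ^ p + (x / 2) ^ p) = (1 + x ^ p) / 2 := by
    rw [Real.div_rpow zero_le_one zero_le_two, Real.div_rpow hx0 zero_le_two, Real.one_rpow,
      Real.rpow_sub_one two_ne_zero]
    field_simp
  rw [h2] at h
  convert h using 4 <;> ring
end

section
/- Let p ≥ 2 and x = 1 − ε with ε ∈ (0,1). Then (1 − ε/2)^p ≤ (1 − δ)·(1 + (1−ε)^p)/2 holds with δ = (ε/2)^p · 2/(1 + (1−ε)^p), and moreover δ ≥ (ε/2)^p. -/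
/-!
With `a = 1`, `b = 1 - ε` we have `1 - ε/2 = (a + b)/2` and `ε/2 = (a - b)/2`, and after multiplying
out `δ` the first claim is the scalar Clarkson inequality
`((a + b)/2)^p + ((a - b)/2)^p ≤ (a^p + b^p)/2` for `p ≥ 2`. That one follows from the
parallelogram identity `((a + b)/2)² + ((a - b)/2)² = (a² + b²)/2` together with superadditivity
and convexity of `t ↦ t^(p/2)` on `[0, ∞)`. The bound `δ ≥ (ε/2)^p` is just `1 + (1 - ε)^p ≤ 2`.
-/

namespace Real

lemma sq_rpow_div_two {t : ℝ} (ht : 0 ≤ t) (p : ℝ) : (t ^ 2) ^ (p / 2) = t ^ p := by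
  rw [← rpow_natCast, ← rpow_mul ht]
  norm_num [mul_div_cancel₀]

lemma rpow_midpoint_le_midpoint_rpow {p a b : ℝ} (ha : 0 ≤ a) (hb : 0 ≤ b) (hp : 1 ≤ p) :
    ((a + b) / 2) ^ p ≤ (a ^ p + b ^ p) / 2 := by
  have h := (convexOn_rpow hp).2 (Set.mem_Ici.mpr ha) (Set.mem_Ici.mpr hb)
    (by norm_num : (0 : ℝ) ≤ 1 / 2) (by norm_num : (0 : ℝ) ≤ 1 / 2) (by norm_num)
  simp only [smul_eq_mul] at h
  calc ((a + b) / 2) ^ p = (1 / 2 * a + 1 / 2 * b) ^ p := by ring_nf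
    _ ≤ 1 / 2 * a ^ p + 1 / 2 * b ^ p := h
    _ = (a ^ p + b ^ p) / 2 := by ring

/-- Clarkson's first inequality for two nonnegative reals. -/
theorem rpow_half_add_add_rpow_half_sub_le {p a b : ℝ} (hb : 0 ≤ b) (hba : b ≤ a) (hp : 2 ≤ p) :
    ((a + b) / 2) ^ p + ((a - b) / 2) ^ p ≤ (a ^ p + b ^ p) / 2 := by
  have ha : 0 ≤ a := hb.trans hba
  calc ((a + b) / 2) ^ p + ((a - b) / 2) ^ p
      = (((a + b) / 2) ^ 2) ^ (p / 2) + (((a - b) / 2) ^ 2) ^ (p / 2) := by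
        rw [sq_rpow_div_two (by linarith), sq_rpow_div_two (by linarith)]
    _ ≤ (((a + b) / 2) ^ 2 + ((a - b) / 2) ^ 2) ^ (p / 2) :=
        add_rpow_le_rpow_add (sq_nonneg _) (sq_nonneg _) (by linarith)
    _ = ((a ^ 2 + b ^ 2) / 2) ^ (p / 2) := by ring_nf
    _ ≤ ((a ^ 2) ^ (p / 2) + (b ^ 2) ^ (p / 2)) / 2 :=
        rpow_midpoint_le_midpoint_rpow (sq_nonneg a) (sq_nonneg b) (by linarith)
    _ = (a ^ p + b ^ p) / 2 := by rw [sq_rpow_div_two ha, sq_rpow_div_two hb]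

end Real

theorem stmt_13 (p ε : ℝ) (hp : 2 ≤ p) (hε0 : 0 < ε) (hε1 : ε < 1) :
    (1 - ε / 2) ^ p ≤
        (1 - (ε / 2) ^ p * 2 / (1 + (1 - ε) ^ p)) * (1 + (1 - ε) ^ p) / 2 ∧
      (ε / 2) ^ p ≤ (ε / 2) ^ p * 2 / (1 + (1 - ε) ^ p) := by
  have hx_nonneg : 0 ≤ (1 - ε) ^ p := Real.rpow_nonneg (by linarith) p
  have hx_le_one : (1 - ε) ^ p ≤ 1 := Real.rpow_le_one (by linarith) (by linarith) (by linarith)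
  have hc_nonneg : 0 ≤ (ε / 2) ^ p := Real.rpow_nonneg (by linarith) p
  constructor
  · have hclarkson := Real.rpow_half_add_add_rpow_half_sub_le (a := 1) (b := 1 - ε)
      (by linarith) (by linarith) hp
    have hrhs : (1 - (ε / 2) ^ p * 2 / (1 + (1 - ε) ^ p)) * (1 + (1 - ε) ^ p) / 2 =
        (1 + (1 - ε) ^ p) / 2 - (ε / 2) ^ p := by
      field_simp
    rw [show (1 + (1 - ε)) / 2 = 1 - ε / 2 by ring, show (1 - (1 - ε)) / 2 = ε / 2 by ring,
      Real.one_rpow] at hclarkson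
    rw [hrhs]
    linarith
  · rw [mul_div_assoc]
    refine le_mul_of_one_le_right hc_nonneg ?_
    rw [le_div_iff₀ (by linarith)]
    linarith
end

section
/- (Iteration lemma of Giaquinta–Giusti, Acerbi–Mingione version) Let φ : (0, R₀] → ℝ be nonnegative and satisfy φ(s) ≤ M·φ(t) whenever 0 < s ≤ t ≤ R₀, for some constant M ≥ 1. Suppose φ(ρ) ≤ A[(ρ/R)^α + ε]·φ(R) + B·R^β for all 0 < ρ < R ≤ R₀, where A, α, β > 0, B, ε ≥ 0 and β < α. Then there exist ε₀ = ε₀(A, α, β) > 0 and c = c(A, α, β) > 0 such that if ε < ε₀, then φ(ρ) ≤ c·M·(ρ/R)^β·[φ(R) + B·R^β] for all 0 < ρ < R ≤ R₀. -/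
set_option maxHeartbeats 1600000 in
theorem stmt_15 (A α β : ℝ) (hA : 0 < A) (hα : 0 < α) (hβ : 0 < β) (hβα : β < α) :
    ∃ ε₀ : ℝ, 0 < ε₀ ∧ ∃ c : ℝ, 0 < c ∧
      ∀ (R₀ : ℝ) (φ : ℝ → ℝ) (M B ε : ℝ),
        0 < R₀ → 1 ≤ M → 0 ≤ B → 0 ≤ ε →
        (∀ ρ, 0 < ρ → ρ ≤ R₀ → 0 ≤ φ ρ) →
        (∀ s t, 0 < s → s ≤ t → t ≤ R₀ → φ s ≤ M * φ t) →
        (∀ ρ R, 0 < ρ → ρ < R → R ≤ R₀ →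
          φ ρ ≤ A * ((ρ / R) ^ α + ε) * φ R + B * R ^ β) →
        ε < ε₀ →
        ∀ ρ R, 0 < ρ → ρ < R → R ≤ R₀ →
          φ ρ ≤ c * M * (ρ / R) ^ β * (φ R + B * R ^ β) := by
  set A' : ℝ := A + 1 with hA'def
  have hA'1 : 1 < A' := by simp [hA'def]; linarith
  have h2A' : 1 < 2 * A' := by linarith
  have h2A'0 : (0:ℝ) < 2 * A' := by linarith
  set γ : ℝ := (α + β) / 2 with hγdef
  have hβγ : β < γ := by simp [hγdef]; linarith
  have hγα : γ < α := by simp [hγdef]; linarith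
  set τ : ℝ := (2 * A') ^ (-(α - γ)⁻¹) with hτdef
  have hτ0 : 0 < τ := Real.rpow_pos_of_pos h2A'0 _
  have hτ1 : τ < 1 := by
    apply Real.rpow_lt_one_of_one_lt_of_neg h2A'
    simp only [neg_neg, Left.neg_neg_iff]
    exact inv_pos.mpr (by linarith)
  have hαγ : (0:ℝ) < α - γ := sub_pos.mpr hγα
  -- key identity : 2 * A' * τ ^ α = τ ^ γ
  have hkey : 2 * A' * τ ^ α = τ ^ γ := by
    have e1 : τ ^ α = (2 * A') ^ (-(α - γ)⁻¹ * α) := by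
      rw [hτdef, ← Real.rpow_mul h2A'0.le]
    have e2 : τ ^ γ = (2 * A') ^ (-(α - γ)⁻¹ * γ) := by
      rw [hτdef, ← Real.rpow_mul h2A'0.le]
    rw [e1, e2]
    calc 2 * A' * (2 * A') ^ (-(α - γ)⁻¹ * α)
        = (2 * A') ^ (1 + -(α - γ)⁻¹ * α) := by
          rw [Real.rpow_add h2A'0, Real.rpow_one]
      _ = (2 * A') ^ (-(α - γ)⁻¹ * γ) := by
          congr 1
          field_simp
          ring
  have hτγβ : τ ^ γ < τ ^ β :=
    Real.rpow_lt_rpow_of_exponent_gt hτ0 hτ1 hβγ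
  have hd : 0 < τ ^ β - τ ^ γ := by linarith
  set K : ℝ := (τ ^ β - τ ^ γ)⁻¹ with hKdef
  have hK0 : 0 < K := inv_pos.mpr hd
  have hKmul : (τ ^ β - τ ^ γ) * K = 1 := mul_inv_cancel₀ (ne_of_gt hd)
  have hε₀ : 0 < τ ^ α := Real.rpow_pos_of_pos hτ0 _
  refine ⟨τ ^ α, hε₀, τ ^ (-β) * max 1 K, by positivity, ?_⟩
  intro R₀ φ M B ε hR₀ hM hB hε hφ0 hmono hiter hεlt ρ R hρ hρR hRR₀
  have hR : 0 < R := lt_trans hρ hρR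
  have hφR : 0 ≤ φ R := hφ0 R hR hRR₀
  have hRβ : 0 < R ^ β := Real.rpow_pos_of_pos hR _
  -- one-step estimate
  have step : ∀ r : ℝ, 0 < r → r ≤ R₀ → φ (τ * r) ≤ τ ^ γ * φ r + B * r ^ β := by
    intro r hr hrle
    have h1 := hiter (τ * r) r (by positivity) (by nlinarith) hrle
    have hq : τ * r / r = τ := by field_simp
    rw [hq] at h1
    have hφr := hφ0 r hr hrle
    have hco : A * (τ ^ α + ε) ≤ τ ^ γ := by
      have h1 : τ ^ α + ε ≤ 2 * τ ^ α := by linarith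
      have h2 : A * (τ ^ α + ε) ≤ A' * (2 * τ ^ α) :=
        mul_le_mul (by linarith) h1 (by linarith) (by linarith)
      have h3 : A' * (2 * τ ^ α) = τ ^ γ := by rw [← hkey]; ring
      linarith
    nlinarith [mul_le_mul_of_nonneg_right hco hφr]
  -- iteration
  have ind : ∀ k : ℕ, φ (τ ^ k * R) ≤ (τ ^ k) ^ β * (φ R + K * (B * R ^ β)) := by
    intro k
    induction k with
    | zero =>
        simp only [pow_zero, one_mul, Real.one_rpow]
        nlinarith [mul_nonneg hK0.le (mul_nonneg hB hRβ.le)]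
    | succ k ih =>
        have hk0 : 0 < τ ^ k := pow_pos hτ0 k
        have hkR : 0 < τ ^ k * R := by positivity
        have hk1 : τ ^ k ≤ 1 := pow_le_one₀ hτ0.le hτ1.le
        have hkR₀ : τ ^ k * R ≤ R₀ := le_trans (by nlinarith) hRR₀
        have h1 := step (τ ^ k * R) hkR hkR₀
        have heq : τ ^ (k + 1) * R = τ * (τ ^ k * R) := by ring
        rw [heq]
        have hsplit : (τ ^ k * R) ^ β = (τ ^ k) ^ β * R ^ β :=
          Real.mul_rpow hk0.le hR.le
        have hsplit2 : (τ ^ (k + 1)) ^ β = τ ^ β * (τ ^ k) ^ β := by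
          rw [pow_succ, mul_comm (τ ^ k) τ]
          exact Real.mul_rpow hτ0.le hk0.le
        rw [hsplit] at h1
        rw [hsplit2]
        have hX : 0 < (τ ^ k) ^ β := Real.rpow_pos_of_pos hk0 _
        have hτγ0 : 0 < τ ^ γ := Real.rpow_pos_of_pos hτ0 _
        have h2 : τ ^ γ * φ (τ ^ k * R) ≤ τ ^ γ * ((τ ^ k) ^ β * (φ R + K * (B * R ^ β))) :=
          mul_le_mul_of_nonneg_left ih hτγ0.le
        have hPe : (τ ^ β - τ ^ γ) * (φ R + K * (B * R ^ β))
            = (τ ^ β - τ ^ γ) * φ R + B * R ^ β := by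
          rw [mul_add, ← mul_assoc, hKmul, one_mul]
        have hPX : (τ ^ k) ^ β * ((τ ^ β - τ ^ γ) * (φ R + K * (B * R ^ β)))
            = (τ ^ k) ^ β * ((τ ^ β - τ ^ γ) * φ R + B * R ^ β) := by rw [hPe]
        nlinarith [hPX, mul_nonneg hX.le (mul_nonneg hd.le hφR)]
  -- choose k with τ^(k+1) R < ρ ≤ τ^k R
  have hex : ∃ n : ℕ, τ ^ n * R < ρ := by
    obtain ⟨n, hn⟩ := exists_pow_lt_of_lt_one (div_pos hρ hR) hτ1
    exact ⟨n, by rw [← lt_div_iff₀ hR]; exact hn⟩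
  classical
  set n := Nat.find hex with hn
  have hnspec : τ ^ n * R < ρ := Nat.find_spec hex
  have hn0 : n ≠ 0 := by
    intro h
    rw [h] at hnspec
    simp at hnspec
    linarith
  obtain ⟨k, hk⟩ := Nat.exists_eq_succ_of_ne_zero hn0
  have hge : ρ ≤ τ ^ k * R := by
    have := Nat.find_min hex (by omega : k < n)
    linarith [not_lt.mp this]
  have hk0 : 0 < τ ^ k := pow_pos hτ0 k
  have hk1 : τ ^ k ≤ 1 := pow_le_one₀ hτ0.le hτ1.le
  have hkR₀ : τ ^ k * R ≤ R₀ := le_trans (by nlinarith) hRR₀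
  have h1 : φ ρ ≤ M * φ (τ ^ k * R) := hmono ρ (τ ^ k * R) hρ hge hkR₀
  have h2 := ind k
  set P : ℝ := φ R + K * (B * R ^ β) with hPdef
  have hP0 : 0 ≤ P := by positivity
  -- bound (τ^k)^β
  have hlt : τ ^ (k + 1) < ρ / R := by
    rw [lt_div_iff₀ hR]; rw [hk] at hnspec; exact hnspec
  have hb1 : (τ ^ (k + 1)) ^ β ≤ (ρ / R) ^ β :=
    Real.rpow_le_rpow (by positivity) hlt.le hβ.le
  have hsplit2 : (τ ^ (k + 1)) ^ β = τ ^ β * (τ ^ k) ^ β := by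
    rw [pow_succ, mul_comm (τ ^ k) τ]
    exact Real.mul_rpow hτ0.le hk0.le
  have hτβ : 0 < τ ^ β := Real.rpow_pos_of_pos hτ0 _
  have hτnegβ : τ ^ (-β) = (τ ^ β)⁻¹ := Real.rpow_neg hτ0.le β
  have hb2 : (τ ^ k) ^ β ≤ τ ^ (-β) * (ρ / R) ^ β := by
    rw [hτnegβ, ← div_eq_inv_mul, le_div_iff₀ hτβ]
    calc (τ ^ k) ^ β * τ ^ β = (τ ^ (k + 1)) ^ β := by rw [hsplit2]; ring
      _ ≤ (ρ / R) ^ β := hb1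
  have hb3 : P ≤ max 1 K * (φ R + B * R ^ β) := by
    have h1K : 1 ≤ max 1 K := le_max_left _ _
    have hKK : K ≤ max 1 K := le_max_right _ _
    have hBR : 0 ≤ B * R ^ β := by positivity
    rw [hPdef]
    nlinarith
  have hX : 0 ≤ (τ ^ k) ^ β := (Real.rpow_pos_of_pos hk0 _).le
  have hM0 : 0 ≤ M := by linarith
  calc φ ρ ≤ M * φ (τ ^ k * R) := h1
    _ ≤ M * ((τ ^ k) ^ β * P) := mul_le_mul_of_nonneg_left h2 hM0
    _ ≤ M * ((τ ^ (-β) * (ρ / R) ^ β) * (max 1 K * (φ R + B * R ^ β))) := by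
        apply mul_le_mul_of_nonneg_left _ hM0
        exact mul_le_mul hb2 hb3 hP0 (by positivity)
    _ = τ ^ (-β) * max 1 K * M * (ρ / R) ^ β * (φ R + B * R ^ β) := by ring
end
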